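/- arXiv:2509.05252 — 7 statements merged into one kernel-verified Lean document; each statement's English description precedes it below -/
import Mathlib

section
/- Let X be a ball Banach function space on ℝ^n and let f ∈ X. Suppose there is a constant C > 0 such that for every g ∈ L^1(ℝ^n) the convolution f*g belongs to X and ‖f*g‖_X ≤ C‖f‖_X‖g‖_{L^1}. Then there is a constant C' > 0 (depending only on C and the implied constants of X) such that for every z ∈ ℝ^n the translate f(·−z) belongs to X and ‖f(·−z)‖_X ≤ C'‖f‖_X. -/
open MeasureTheory Filter ENNReal

noncomputable section

/-- ℝⁿ as a Euclidean space. -/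
abbrev Rn (n : ℕ) := EuclideanSpace ℝ (Fin n)

/-- A Banach space `X` contained in `L⁰(ℝⁿ)`: a collection of (a.e. equivalence
classes of) measurable functions on `ℝⁿ`, with a complete norm. -/
structure BanachInL0 (n : ℕ) where
  carrier : Set (Rn n → ℝ)
  norm : (Rn n → ℝ) → ℝ
  mem_congr : ∀ {f g : Rn n → ℝ}, f =ᵐ[volume] g → f ∈ carrier → g ∈ carrier
  norm_congr : ∀ {f g : Rn n → ℝ}, f =ᵐ[volume] g → norm f = norm g
  aemeasurable : ∀ {f : Rn n → ℝ}, f ∈ carrier → AEMeasurable f volume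
  zero_mem : (0 : Rn n → ℝ) ∈ carrier
  add_mem : ∀ {f g : Rn n → ℝ}, f ∈ carrier → g ∈ carrier → f + g ∈ carrier
  smul_mem : ∀ (c : ℝ) {f : Rn n → ℝ}, f ∈ carrier → c • f ∈ carrier
  norm_nonneg : ∀ f : Rn n → ℝ, 0 ≤ norm f
  norm_eq_zero : ∀ {f : Rn n → ℝ}, f ∈ carrier → norm f = 0 → f =ᵐ[volume] (0 : Rn n → ℝ)
  norm_zero : norm 0 = 0
  norm_add_le : ∀ {f g : Rn n → ℝ}, f ∈ carrier → g ∈ carrier → norm (f + g) ≤ norm f + norm g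
  norm_smul : ∀ (c : ℝ) (f : Rn n → ℝ), norm (c • f) = |c| * norm f
  complete : ∀ F : ℕ → Rn n → ℝ, (∀ k, F k ∈ carrier) →
    (∀ ε : ℝ, 0 < ε → ∃ N : ℕ, ∀ k l, N ≤ k → N ≤ l → norm (F k - F l) < ε) →
    ∃ g ∈ carrier, Tendsto (fun k => norm (F k - g)) atTop (nhds 0)

namespace BanachInL0

variable {n : ℕ}

/-- The lattice property (L). -/
def PropL (X : BanachInL0 n) : Prop :=
  ∀ f g : Rn n → ℝ, f ∈ X.carrier → AEMeasurable g volume →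
    (∀ᵐ x ∂volume, |g x| ≤ |f x|) → g ∈ X.carrier ∧ X.norm g ≤ X.norm f

/-- The Fatou property (F). -/
def PropF (X : BanachInL0 n) : Prop :=
  ∀ (F : ℕ → Rn n → ℝ) (f : Rn n → ℝ), (∀ k, F k ∈ X.carrier) → AEMeasurable f volume →
    (∀ᵐ x ∂volume, (∀ k, 0 ≤ F k x) ∧ Monotone (fun k => F k x) ∧
      Tendsto (fun k => F k x) atTop (nhds (f x))) →
    BddAbove (Set.range fun k => X.norm (F k)) →
    f ∈ X.carrier ∧ X.norm f = ⨆ k, X.norm (F k)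

/-- The saturation property (Sa). -/
def PropSa (X : BanachInL0 n) : Prop :=
  ∀ E : Set (Rn n), MeasurableSet E → 0 < volume E →
    ∃ F : Set (Rn n), MeasurableSet F ∧ F ⊆ E ∧ 0 < volume F ∧
      F.indicator (fun _ => (1 : ℝ)) ∈ X.carrier

/-- Property (BSi): the indicator of every ball belongs to `X`. -/
def PropBSi (X : BanachInL0 n) : Prop :=
  ∀ (c : Rn n) (r : ℝ), 0 < r →
    (Metric.ball c r).indicator (fun _ => (1 : ℝ)) ∈ X.carrier

/-- Property (BLI): functions in `X` are locally integrable, uniformly on each ball. -/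
def PropBLI (X : BanachInL0 n) : Prop :=
  ∀ (c : Rn n) (r : ℝ), 0 < r → ∃ C : ℝ, ∀ f ∈ X.carrier,
    ∫⁻ y in Metric.ball c r, ENNReal.ofReal |f y| ≤ ENNReal.ofReal (C * X.norm f)

/-- Property (Si): the indicator of every set of finite measure belongs to `X`. -/
def PropSi (X : BanachInL0 n) : Prop :=
  ∀ E : Set (Rn n), MeasurableSet E → volume E < ∞ →
    E.indicator (fun _ => (1 : ℝ)) ∈ X.carrier

/-- Property (LI): functions in `X` are integrable on sets of finite measure,
uniformly on each such set. -/
def PropLI (X : BanachInL0 n) : Prop :=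
  ∀ E : Set (Rn n), MeasurableSet E → volume E < ∞ → ∃ C : ℝ, ∀ f ∈ X.carrier,
    ∫⁻ y in E, ENNReal.ofReal |f y| ≤ ENNReal.ofReal (C * X.norm f)

/-- A saturated Banach function space: (L), (F) and (Sa). -/
def IsSaturatedBFS (X : BanachInL0 n) : Prop :=
  X.PropL ∧ X.PropF ∧ X.PropSa

/-- A ball Banach function space: (L), (F), (BSi) and (BLI). -/
def IsBallBFS (X : BanachInL0 n) : Prop :=
  X.PropL ∧ X.PropF ∧ X.PropBSi ∧ X.PropBLI

end BanachInL0

/-- The Köthe dual of a set `S ⊆ L⁰(ℝⁿ)` of measurable functions. -/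
def kotheDual {n : ℕ} (S : Set (Rn n → ℝ)) : Set (Rn n → ℝ) :=
  {g | AEMeasurable g volume ∧ ∀ f ∈ S, Integrable (fun x => f x * g x) volume}

/-- The Köthe dual (semi)norm associated with a set `S` normed by `N : S → ℝ`. -/
def kotheDualNorm {n : ℕ} (S : Set (Rn n → ℝ)) (N : (Rn n → ℝ) → ℝ)
    (g : Rn n → ℝ) : ℝ≥0∞ :=
  ⨆ (f : Rn n → ℝ) (_ : f ∈ S ∧ N f ≤ 1), ∫⁻ x, ENNReal.ofReal |f x * g x|

/-- The Köthe dual (semi)norm associated with a set `S` normed by `N : S → ℝ≥0∞`. -/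
def kotheDualNormE {n : ℕ} (S : Set (Rn n → ℝ)) (N : (Rn n → ℝ) → ℝ≥0∞)
    (g : Rn n → ℝ) : ℝ≥0∞ :=
  ⨆ (f : Rn n → ℝ) (_ : f ∈ S ∧ N f ≤ 1), ∫⁻ x, ENNReal.ofReal |f x * g x|

/-- The Hardy–Littlewood maximal operator on `ℝⁿ`. -/
def hlMaximal {n : ℕ} (f : Rn n → ℝ) (x : Rn n) : ℝ≥0∞ :=
  ⨆ (c : Rn n) (r : ℝ) (_ : x ∈ Metric.ball c r),
    (volume (Metric.ball c r))⁻¹ * ∫⁻ y in Metric.ball c r, ENNReal.ofReal |f y|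

/-! Convolving `f` with the normalized indicator of the closed ball `B(z, r)` gives, at `x`,
the average of `f` over `B(x - z, r)`. Since (BLI) makes `f` locally integrable, Lebesgue's
differentiation theorem turns these averages into `f (x - z)` for a.e. `x` as `r → 0`. The
kernels have `L¹`-norm one, so every convolution has `X`-norm at most `C ‖f‖_X`, and the Fatou
property, applied to the increasing tail infima of their absolute values, passes this bound to
the a.e. limit `f (· - z)`. -/

open Metric Topology

lemma monotone_ciInf_nat_add {α : Type*} [ConditionallyCompleteLattice α] {u : ℕ → α}
    (hu : BddBelow (Set.range u)) : Monotone fun m => ⨅ k, u (m + k) := fun m m' hmm' =>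
  le_ciInf fun k => calc
    ⨅ k, u (m + k) ≤ u (m + (m' - m + k)) :=
      ciInf_le (hu.mono (Set.range_comp_subset_range (m + ·) u)) _
    _ = u (m' + k) := by congr 1; omega

lemma Filter.Tendsto.ciInf_nat_add {α : Type*} [ConditionallyCompleteLinearOrder α]
    [TopologicalSpace α] [OrderTopology α] [DenselyOrdered α] {u : ℕ → α} {l : α}
    (hu : Tendsto u atTop (𝓝 l)) (hbdd : BddBelow (Set.range u)) :
    Tendsto (fun m => ⨅ k, u (m + k)) atTop (𝓝 l) := by
  refine tendsto_order.2 ⟨fun a ha => ?_, fun a ha => ?_⟩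
  · obtain ⟨b, hab, hbl⟩ := exists_between ha
    obtain ⟨N, hN⟩ := eventually_atTop.1 (hu.eventually (lt_mem_nhds hbl))
    exact eventually_atTop.2
      ⟨N, fun m hm => hab.trans_le (le_ciInf fun k => (hN _ (by omega)).le)⟩
  · filter_upwards [hu.eventually (gt_mem_nhds ha)] with m hm
    exact (ciInf_le (hbdd.mono (Set.range_comp_subset_range (m + ·) u)) 0).trans_lt hm

namespace BanachInL0

variable {n : ℕ} {X : BanachInL0 n}

theorem locallyIntegrable_of_mem (hBLI : X.PropBLI) {f : Rn n → ℝ} (hf : f ∈ X.carrier) :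
    LocallyIntegrable f volume := fun x => by
  obtain ⟨C, hC⟩ := hBLI x 1 one_pos
  refine ⟨ball x 1, ball_mem_nhds x one_pos,
    (X.aemeasurable hf).aestronglyMeasurable.restrict, ?_⟩
  simp_rw [HasFiniteIntegral, ← ofReal_norm, Real.norm_eq_abs]
  exact (hC f hf).trans_lt ofReal_lt_top

theorem mem_and_norm_le_of_ae_tendsto (hL : X.PropL) (hF : X.PropF) {F : ℕ → Rn n → ℝ}
    {g : Rn n → ℝ} {M : ℝ} (hmem : ∀ k, F k ∈ X.carrier)
    (hnorm : ∀ k, X.norm (F k) ≤ M)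
    (hlim : ∀ᵐ x, Tendsto (fun k => F k x) atTop (𝓝 (g x))) :
    g ∈ X.carrier ∧ X.norm g ≤ M := by
  have hbdd : ∀ x, BddBelow (Set.range fun k => |F k x|) := fun x =>
    ⟨0, by rintro _ ⟨k, rfl⟩; exact abs_nonneg _⟩
  set G : ℕ → Rn n → ℝ := fun m x => ⨅ k, |F (m + k) x|
  have hG_nonneg : ∀ m x, 0 ≤ G m x := fun m x => le_ciInf fun k => abs_nonneg _
  have hG : ∀ m, G m ∈ X.carrier ∧ X.norm (G m) ≤ M := fun m => by
    have hmeas : AEMeasurable (G m) volume :=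
      AEMeasurable.iInf fun k => (X.aemeasurable (hmem (m + k))).abs
    have hle : ∀ x, |G m x| ≤ |F m x| := fun x =>
      (abs_of_nonneg (hG_nonneg m x)).trans_le
        (ciInf_le ((hbdd x).mono (Set.range_comp_subset_range (m + ·) _)) 0)
    obtain ⟨hGm, hGm_norm⟩ := hL _ _ (hmem m) hmeas (ae_of_all _ hle)
    exact ⟨hGm, hGm_norm.trans (hnorm m)⟩
  have hg : AEMeasurable g volume :=
    aemeasurable_of_tendsto_metrizable_ae' (fun k => X.aemeasurable (hmem k)) hlim
  obtain ⟨habs, habs_norm⟩ := hF G (fun x => |g x|) (fun m => (hG m).1) hg.abs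
    (by
      filter_upwards [hlim] with x hx
      exact ⟨fun m => hG_nonneg m x, monotone_ciInf_nat_add (hbdd x),
        hx.abs.ciInf_nat_add (hbdd x)⟩)
    ⟨M, by rintro _ ⟨m, rfl⟩; exact (hG m).2⟩
  obtain ⟨hg_mem, hg_norm⟩ := hL _ g habs hg (ae_of_all _ fun x => (abs_abs (g x)).ge)
  exact ⟨hg_mem, hg_norm.trans (habs_norm ▸ ciSup_le fun m => (hG m).2)⟩

end BanachInL0

section NormalizedBallIndicator

variable {E : Type*} [NormedAddCommGroup E] [NormedSpace ℝ E] [FiniteDimensional ℝ E]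
  [MeasurableSpace E] [BorelSpace E] (μ : Measure E) [μ.IsAddHaarMeasure]

def normalizedBallIndicator (z : E) (r : ℝ) : E → ℝ :=
  (closedBall z r).indicator fun _ => (μ.real (closedBall z r))⁻¹

lemma integrable_normalizedBallIndicator (z : E) (r : ℝ) :
    Integrable (normalizedBallIndicator μ z r) μ :=
  (integrable_indicator_iff measurableSet_closedBall).2
    (integrableOn_const measure_closedBall_lt_top.ne)

lemma integral_abs_normalizedBallIndicator (z : E) {r : ℝ} (hr : 0 < r) :
    ∫ y, |normalizedBallIndicator μ z r y| ∂μ = 1 := by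
  have hpos : 0 < μ.real (closedBall z r) :=
    ENNReal.toReal_pos (measure_closedBall_pos μ z hr).ne' measure_closedBall_lt_top.ne
  have hnonneg : ∀ y, 0 ≤ normalizedBallIndicator μ z r y :=
    Set.indicator_nonneg fun _ _ => inv_nonneg.2 measureReal_nonneg
  simp_rw [abs_of_nonneg (hnonneg _), normalizedBallIndicator]
  rw [integral_indicator_const _ measurableSet_closedBall, smul_eq_mul, mul_inv_cancel₀ hpos.ne']

lemma integral_mul_normalizedBallIndicator (f : E → ℝ) (x z : E) (r : ℝ) :
    ∫ y, f (x - y) * normalizedBallIndicator μ z r y ∂μ =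
      ⨍ u in closedBall (x - z) r, f u ∂μ := by
  have hpre : (x - ·) ⁻¹' closedBall (x - z) r = closedBall z r := by
    ext y
    simp only [Set.mem_preimage, mem_closedBall, dist_eq_norm, _root_.sub_sub_sub_cancel_left,
      norm_sub_rev]
  have hball : μ.real (closedBall (x - z) r) = μ.real (closedBall z r) := by
    simp only [measureReal_def, Measure.addHaar_closedBall_center]
  have hind : (fun y => f (x - y) * normalizedBallIndicator μ z r y) =
      (closedBall z r).indicator fun y => f (x - y) * (μ.real (closedBall z r))⁻¹ :=
    funext fun y => (Set.indicator_mul_right _ (fun y => f (x - y)) _).symm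
  rw [hind, integral_indicator measurableSet_closedBall, integral_mul_const, ← hpre,
    (Measure.measurePreserving_sub_left μ x).setIntegral_preimage_emb
      (MeasurableEquiv.subLeft x).measurableEmbedding, hpre, setAverage_eq, hball, smul_eq_mul,
    mul_comm]

lemma ae_tendsto_integral_mul_normalizedBallIndicator {f : E → ℝ} (hf : LocallyIntegrable f μ)
    (z : E) {ι : Type*} {l : Filter ι} {r : ι → ℝ} (hr : Tendsto r l (𝓝[>] 0)) :
    ∀ᵐ x ∂μ, Tendsto (fun j => ∫ y, f (x - y) * normalizedBallIndicator μ z (r j) y ∂μ)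
      l (𝓝 (f (x - z))) := by
  have hsub := (measurePreserving_sub_right μ z).quasiMeasurePreserving
  filter_upwards [hsub.ae (IsUnifLocDoublingMeasure.ae_tendsto_average μ hf 1)] with x hx
  simp_rw [integral_mul_normalizedBallIndicator]
  refine hx _ r hr ?_
  filter_upwards [hr self_mem_nhdsWithin] with j hj
  exact mem_closedBall_self (by simpa using hj.out.le)

end NormalizedBallIndicator

/-- **Translation boundedness from Young's inequality.**
If `X` is a ball Banach function space on `ℝⁿ`, `f ∈ X`, and Young's inequality
`‖f*g‖_X ≤ C‖f‖_X ‖g‖_{L¹}` holds for all `g ∈ L¹(ℝⁿ)`, then the translates of `f`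
belong to `X` with norms uniformly controlled by `‖f‖_X`. -/
theorem translation_bounded_of_young {n : ℕ} (X : BanachInL0 n)
    (hX : X.IsBallBFS) (f : Rn n → ℝ) (hf : f ∈ X.carrier)
    (hY : ∃ C : ℝ, 0 < C ∧ ∀ g : Rn n → ℝ, Integrable g volume →
      (fun x => ∫ y, f (x - y) * g y) ∈ X.carrier ∧
      X.norm (fun x => ∫ y, f (x - y) * g y) ≤ C * X.norm f * ∫ y, |g y|) :
    ∃ C' : ℝ, 0 < C' ∧ ∀ z : Rn n,
      (fun x => f (x - z)) ∈ X.carrier ∧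
      X.norm (fun x => f (x - z)) ≤ C' * X.norm f := by
  obtain ⟨hL, hF, -, hBLI⟩ := hX
  obtain ⟨C, hC, hY⟩ := hY
  refine ⟨C, hC, fun z => ?_⟩
  let r : ℕ → ℝ := fun k => 1 / (k + 1)
  have hr_pos : ∀ k, 0 < r k := fun _ => Nat.one_div_pos_of_nat
  have hr : Tendsto r atTop (𝓝[>] 0) :=
    tendsto_nhdsWithin_of_tendsto_nhds_of_eventually_within _
      tendsto_one_div_add_atTop_nhds_zero_nat (Eventually.of_forall hr_pos)
  have hconv := fun k => hY _ (integrable_normalizedBallIndicator volume z (r k))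
  have hlim := ae_tendsto_integral_mul_normalizedBallIndicator volume
    (X.locallyIntegrable_of_mem hBLI hf) z hr
  refine X.mem_and_norm_le_of_ae_tendsto hL hF (fun k => (hconv k).1) (fun k => ?_) hlim
  simpa only [integral_abs_normalizedBallIndicator volume z (hr_pos k), mul_one] using (hconv k).2
end
end

section
/- Let X be a Banach space contained in L^0(ℝ^n) satisfying the lattice property (L). Then the following are equivalent: (i) X satisfies the saturation property (Sa); (ii) there is an increasing sequence of measurable sets F_1 ⊂ F_2 ⊂ ⋯ ⊂ ℝ^n with χ_{F_k} ∈ X for every k and ⋃_{k=1}^∞ F_k = ℝ^n; (iii) there is a function u ∈ X with u > 0 a.e.; (iv) whenever g ∈ L^0(ℝ^n) satisfies ∫_{ℝ^n} |f(x)g(x)| dx = 0 for all f ∈ X, then g = 0 a.e. -/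
open MeasureTheory Filter ENNReal

noncomputable section

/-! For (i) ⇒ (ii): by (L) the measurable sets with indicator in `X` are closed under finite
unions. Take a sequence of them whose measures, for a finite measure equivalent to Lebesgue
measure, approach the supremum, and accumulate it; if its union left a remainder of positive
measure, (Sa) would give a further disjoint such set and push the measure above the supremum.
For (ii) ⇒ (iii): `∑ₖ 2⁻ᵏ χ_{F_k} / (1 + ‖χ_{F_k}‖)` converges in the complete space
`X`, and by (L) its limit dominates every partial sum a.e., so it is positive on `⋃ₖ F_k`.
For (iv) ⇒ (i): testing (iv) against `χ_E` gives `f ∈ X` not a.e. zero on `E`; some level set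
`E ∩ {ε ≤ |f|}` has positive measure, and its indicator is at most `ε⁻¹ |f|`. -/

namespace MeasureTheory

variable {α : Type*} [MeasurableSpace α] {μ : Measure α}

theorem exists_monotone_measure_compl_iUnion_eq_zero [SFinite μ] {P : Set α → Prop}
    (h_empty : P ∅) (h_union : ∀ s t, P s → P t → P (s ∪ t))
    (h_meas : ∀ s, P s → MeasurableSet s)
    (h_sat : ∀ E, MeasurableSet E → μ E ≠ 0 → ∃ F ⊆ E, P F ∧ μ F ≠ 0) :
    ∃ G : ℕ → Set α, Monotone G ∧ (∀ k, P (G k)) ∧ μ (⋃ k, G k)ᶜ = 0 := by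
  set ν := μ.toFinite
  obtain ⟨u, -, hu_lim, hu_mem⟩ :=
    exists_seq_tendsto_sSup (S := ν '' {s | P s}) ⟨_, ∅, h_empty, rfl⟩ (OrderTop.bddAbove _)
  choose G hG hνG using hu_mem
  set A := Set.accumulate G
  have hA : ∀ k, P (A k) := by
    intro k
    induction k with
    | zero => simpa [A, Set.accumulate_zero_nat] using hG 0
    | succ k ih => simpa [A, Set.accumulate_succ] using h_union _ _ ih (hG (k + 1))
  have hU_meas : MeasurableSet (⋃ k, A k) := .iUnion fun k => h_meas _ (hA k)
  refine ⟨A, Set.monotone_accumulate, hA, ?_⟩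
  by_contra hC
  obtain ⟨F, hFC, hF, hμF⟩ := h_sat _ hU_meas.compl hC
  -- `⋃ k, A k` realizes the supremum of `ν` over `P`, so adding the disjoint set `F` to it
  -- cannot increase its `ν`-measure; `ν` is finite, hence `ν F = 0`.
  have h_sup_le : sSup (ν '' {s | P s}) ≤ ν (⋃ k, A k) :=
    le_of_tendsto' hu_lim fun k => (hνG k).symm.le.trans
      (measure_mono (Set.subset_accumulate.trans (Set.subset_iUnion A k)))
  have h_union_le : ν ((⋃ k, A k) ∪ F) ≤ sSup (ν '' {s | P s}) := by
    rw [Set.iUnion_union, Monotone.measure_iUnion fun i j h =>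
      Set.union_subset_union_left F (Set.monotone_accumulate h)]
    exact iSup_le fun k => le_sSup ⟨_, h_union _ _ (hA k) hF, rfl⟩
  rw [measure_union (disjoint_compl_right.mono_right hFC) (h_meas F hF)] at h_union_le
  have hνF : ν F ≤ 0 := ENNReal.le_of_add_le_add_left (measure_ne_top ν _)
    (by simpa using h_union_le.trans h_sup_le)
  exact hμF (toFinite_apply_eq_zero_iff.mp (nonpos_iff_eq_zero.mp hνF))

theorem exists_pos_measure_inter_le_abs_ne_zero_of_lintegral_ne_zero {f : α → ℝ} {E : Set α}
    (h : ∫⁻ x, ENNReal.ofReal |f x * E.indicator (fun _ => (1 : ℝ)) x| ∂μ ≠ 0) :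
    ∃ ε > 0, μ (E ∩ {x | ε ≤ |f x|}) ≠ 0 := by
  by_contra! h_null
  have h_cover : {x | ¬ENNReal.ofReal |f x * E.indicator (fun _ => (1 : ℝ)) x| = 0} ⊆
      ⋃ m : ℕ, E ∩ {x | 1 / ((m : ℝ) + 1) ≤ |f x|} := by
    intro x hx
    have hxE : x ∈ E := by by_contra hxE; simp [hxE] at hx
    have hfx : f x ≠ 0 := by rintro hfx; simp [hfx] at hx
    obtain ⟨m, hm⟩ := exists_nat_one_div_lt (abs_pos.mpr hfx)
    exact Set.mem_iUnion.mpr ⟨m, hxE, hm.le⟩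
  refine h (lintegral_eq_zero_of_ae_eq_zero ?_)
  exact ae_iff.mpr (measure_mono_null h_cover (measure_iUnion_null fun m =>
    h_null _ (by positivity)))

theorem ae_eq_zero_of_lintegral_abs_mul_eq_zero {u g : α → ℝ} (hu : ∀ᵐ x ∂μ, 0 < u x)
    (hug : AEMeasurable (fun x => u x * g x) μ)
    (h : ∫⁻ x, ENNReal.ofReal |u x * g x| ∂μ = 0) : g =ᵐ[μ] 0 := by
  have h_ae := (lintegral_eq_zero_iff' hug.abs.ennreal_ofReal).mp h
  filter_upwards [h_ae, hu] with x hx hux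
  simpa [hux.ne'] using hx

end MeasureTheory

namespace BanachInL0

open Finset

variable {n : ℕ} {X : BanachInL0 n}

theorem sub_mem {f g : Rn n → ℝ} (hf : f ∈ X.carrier) (hg : g ∈ X.carrier) :
    f - g ∈ X.carrier := by
  simpa [sub_eq_add_neg] using X.add_mem hf (X.smul_mem (-1) hg)

theorem norm_sub_comm (f g : Rn n → ℝ) : X.norm (f - g) = X.norm (g - f) := by
  simpa using (X.norm_smul (-1) (f - g)).symm

theorem sum_mem {ι : Type*} {f : ι → Rn n → ℝ} {s : Finset ι}
    (hf : ∀ i ∈ s, f i ∈ X.carrier) :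
    ∑ i ∈ s, f i ∈ X.carrier := by
  classical
  induction s using Finset.induction_on with
  | empty => simpa using X.zero_mem
  | insert a s ha ih =>
    rw [sum_insert ha]
    exact X.add_mem (hf a (mem_insert_self a s)) (ih fun i hi => hf i (mem_insert_of_mem hi))

theorem norm_sum_le {ι : Type*} {f : ι → Rn n → ℝ} {s : Finset ι}
    (hf : ∀ i ∈ s, f i ∈ X.carrier) :
    X.norm (∑ i ∈ s, f i) ≤ ∑ i ∈ s, X.norm (f i) := by
  classical
  induction s using Finset.induction_on with
  | empty => simp [X.norm_zero]
  | insert a s ha ih =>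
    have hs : ∀ i ∈ s, f i ∈ X.carrier := fun i hi => hf i (mem_insert_of_mem hi)
    rw [sum_insert ha, sum_insert ha]
    exact (X.norm_add_le (hf a (mem_insert_self a s)) (sum_mem hs)).trans (by linarith [ih hs])

theorem indicator_union_mem (hL : X.PropL) {A B : Set (Rn n)} (hA : MeasurableSet A)
    (hB : MeasurableSet B) (hA_mem : A.indicator (fun _ => (1 : ℝ)) ∈ X.carrier)
    (hB_mem : B.indicator (fun _ => (1 : ℝ)) ∈ X.carrier) :
    (A ∪ B).indicator (fun _ => (1 : ℝ)) ∈ X.carrier := by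
  refine (hL _ _ (X.add_mem hA_mem hB_mem)
    (measurable_const.indicator (hA.union hB)).aemeasurable (.of_forall fun x => ?_)).1
  by_cases hxA : x ∈ A <;> by_cases hxB : x ∈ B <;> norm_num [hxA, hxB]

theorem exists_tendsto_of_norm_le_geometric {f : ℕ → Rn n → ℝ}
    (hf : ∀ k, f k ∈ X.carrier) (h_norm : ∀ k, X.norm (f k) ≤ (1 / 2) ^ k) :
    ∃ g ∈ X.carrier, Tendsto (fun N => X.norm (∑ k ∈ range N, f k - g)) atTop (nhds 0) := by
  have h_tail : ∀ k l, k ≤ l →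
      X.norm (∑ i ∈ range l, f i - ∑ i ∈ range k, f i) ≤ 2 * (1 / 2) ^ k := by
    intro k l hkl
    rw [← sum_Ico_eq_sub _ hkl]
    calc X.norm (∑ i ∈ Ico k l, f i)
        ≤ ∑ i ∈ Ico k l, X.norm (f i) := norm_sum_le fun i _ => hf i
      _ ≤ ∑ i ∈ Ico k l, (1 / 2 : ℝ) ^ i := sum_le_sum fun i _ => h_norm i
      _ ≤ (1 / 2) ^ k / (1 - 1 / 2) := geom_sum_Ico_le_of_lt_one (by norm_num) (by norm_num)
      _ = 2 * (1 / 2) ^ k := by ring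
  refine X.complete _ (fun N => sum_mem fun k _ => hf k) fun ε hε => ?_
  obtain ⟨N, hN⟩ := exists_pow_lt_of_lt_one (half_pos hε) (by norm_num : (1 / 2 : ℝ) < 1)
  have h_small : ∀ k l, N ≤ k → k ≤ l →
      X.norm (∑ i ∈ range l, f i - ∑ i ∈ range k, f i) < ε := fun k l hNk hkl =>
    calc _ ≤ 2 * (1 / 2 : ℝ) ^ k := h_tail k l hkl
      _ ≤ 2 * (1 / 2) ^ N := by
        gcongr _ * ?_; exact pow_le_pow_of_le_one (by norm_num) (by norm_num) hNk
      _ < ε := by linarith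
  refine ⟨N, fun k l hk hl => ?_⟩
  rcases le_total k l with hkl | hlk
  · rw [norm_sub_comm]; exact h_small k l hk hkl
  · exact h_small l k hl hlk

theorem ae_le_of_tendsto (hL : X.PropL) {S : ℕ → Rn n → ℝ} {g : Rn n → ℝ}
    (hS : ∀ N, S N ∈ X.carrier) (h_mono : ∀ x, Monotone (S · x)) (hg : g ∈ X.carrier)
    (h_lim : Tendsto (fun N => X.norm (S N - g)) atTop (nhds 0)) (N : ℕ) :
    ∀ᵐ x, S N x ≤ g x := by
  set h : Rn n → ℝ := fun x => max (S N x - g x) 0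
  -- `(S N - g)⁺ ≤ |S M - g|` for all `M ≥ N`, and the right-hand side tends to `0` in norm.
  have h_dom : ∀ M, N ≤ M → h ∈ X.carrier ∧ X.norm h ≤ X.norm (S M - g) := fun M hNM =>
    hL _ h (sub_mem (hS M) hg)
      (((X.aemeasurable (hS N)).sub (X.aemeasurable hg)).max aemeasurable_const)
      (.of_forall fun x => by
        rw [abs_of_nonneg (le_max_right _ _)]
        exact max_le ((sub_le_sub_right (h_mono x hNM) _).trans (le_abs_self _)) (abs_nonneg _))
  have h_norm : X.norm h = 0 :=
    le_antisymm (ge_of_tendsto h_lim (eventually_atTop.mpr ⟨N, fun M hM => (h_dom M hM).2⟩))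
      (X.norm_nonneg h)
  filter_upwards [X.norm_eq_zero (h_dom N le_rfl).1 h_norm] with x hx
  simpa [h] using hx

theorem exists_monotone_iUnion_eq_univ_of_propSa (hL : X.PropL) (hSa : X.PropSa) :
    ∃ F : ℕ → Set (Rn n), (∀ k, MeasurableSet (F k)) ∧ Monotone F ∧
      (∀ k, (F k).indicator (fun _ => (1 : ℝ)) ∈ X.carrier) ∧ (⋃ k, F k) = Set.univ := by
  obtain ⟨G, hG_mono, hG, hG_null⟩ :=
    exists_monotone_measure_compl_iUnion_eq_zero (μ := volume)
    (P := fun s => MeasurableSet s ∧ s.indicator (fun _ => (1 : ℝ)) ∈ X.carrier)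
    ⟨.empty, by rw [Set.indicator_empty]; exact X.zero_mem⟩
    (fun s t hs ht => ⟨hs.1.union ht.1, indicator_union_mem hL hs.1 ht.1 hs.2 ht.2⟩)
    (fun s hs => hs.1)
    (fun E hE hE0 => by
      obtain ⟨F, hF_meas, hFE, hF_pos, hF⟩ := hSa E hE (pos_iff_ne_zero.mpr hE0)
      exact ⟨F, hFE, ⟨hF_meas, hF⟩, hF_pos.ne'⟩)
  set N := (⋃ k, G k)ᶜ
  have hN_meas : MeasurableSet N := (MeasurableSet.iUnion fun k => (hG k).1).compl
  refine ⟨fun k => N ∪ G k, fun k => hN_meas.union (hG k).1,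
    fun i j hij => Set.union_subset_union_right N (hG_mono hij), fun k => ?_, ?_⟩
  · have h_ae : (N ∪ G k : Set (Rn n)) =ᵐ[volume] G k :=
      union_ae_eq_right.mpr (measure_mono_null Set.sdiff_subset hG_null)
    exact X.mem_congr (indicator_ae_eq_of_ae_eq_set h_ae).symm (hG k).2
  · rw [← Set.union_iUnion, Set.compl_union_self]

theorem exists_ae_pos_of_iUnion_eq_univ (hL : X.PropL) {F : ℕ → Set (Rn n)}
    (hF : ∀ k, (F k).indicator (fun _ => (1 : ℝ)) ∈ X.carrier)
    (h_cover : (⋃ k, F k) = Set.univ) :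
    ∃ u ∈ X.carrier, ∀ᵐ x, 0 < u x := by
  set χ : ℕ → Rn n → ℝ := fun k => (F k).indicator (fun _ => 1)
  set c : ℕ → ℝ := fun k => (1 / 2) ^ k / (1 + X.norm (χ k))
  set f : ℕ → Rn n → ℝ := fun k => c k • χ k
  have hχ_norm : ∀ k, 0 < 1 + X.norm (χ k) := fun k => by linarith [X.norm_nonneg (χ k)]
  have hc_pos : ∀ k, 0 < c k := fun k => div_pos (by positivity) (hχ_norm k)
  have hf : ∀ k, f k ∈ X.carrier := fun k => X.smul_mem _ (hF k)
  have hf_norm : ∀ k, X.norm (f k) ≤ (1 / 2) ^ k := fun k => by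
    rw [X.norm_smul, abs_of_pos (hc_pos k), div_mul_eq_mul_div, div_le_iff₀ (hχ_norm k)]
    nlinarith [X.norm_nonneg (χ k), pow_pos (by norm_num : (0 : ℝ) < 1 / 2) k]
  have hf_nonneg : ∀ k x, 0 ≤ f k x := fun k x =>
    mul_nonneg (hc_pos k).le (Set.indicator_nonneg (fun _ _ => zero_le_one) x)
  obtain ⟨u, hu, h_lim⟩ := exists_tendsto_of_norm_le_geometric hf hf_norm
  have h_le := ae_le_of_tendsto hL (fun N => sum_mem fun k _ => hf k)
    (fun x => monotone_nat_of_le_succ fun N => by simp [sum_range_succ, hf_nonneg]) hu h_lim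
  refine ⟨u, hu, ?_⟩
  filter_upwards [ae_all_iff.mpr h_le] with x hx
  obtain ⟨k, hk⟩ := Set.mem_iUnion.mp (h_cover ▸ Set.mem_univ x)
  calc 0 < c k := hc_pos k
    _ = f k x := by simp [f, χ, hk]
    _ ≤ ∑ i ∈ range (k + 1), f i x :=
      single_le_sum (fun i _ => hf_nonneg i x) (self_mem_range_succ k)
    _ ≤ u x := by simpa using hx (k + 1)

theorem propSa_of_forall_lintegral_eq_zero (hL : X.PropL)
    (h : ∀ g : Rn n → ℝ, AEMeasurable g volume →
      (∀ f ∈ X.carrier, ∫⁻ x, ENNReal.ofReal |f x * g x| = 0) → g =ᵐ[volume] 0) :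
    X.PropSa := by
  intro E hE hE_pos
  obtain ⟨f, hf, hf_int⟩ : ∃ f ∈ X.carrier,
      ∫⁻ x, ENNReal.ofReal |f x * E.indicator (fun _ => (1 : ℝ)) x| ≠ 0 := by
    by_contra! h_zero
    have h_ae := ae_iff.mp (h _ (measurable_const.indicator hE).aemeasurable h_zero)
    exact hE_pos.ne' (measure_mono_null (fun x hx => by simp [hx]) h_ae)
  have hf_ae := X.aemeasurable hf
  set f' := hf_ae.mk f
  obtain ⟨ε, hε, hF⟩ :=
    exists_pos_measure_inter_le_abs_ne_zero_of_lintegral_ne_zero (f := f') (μ := volume)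
    (by
      rwa [← lintegral_congr_ae]
      filter_upwards [hf_ae.ae_eq_mk] with x hx
      rw [hx])
  have hF_meas : MeasurableSet (E ∩ {x | ε ≤ |f' x|}) :=
    hE.inter (measurableSet_le measurable_const hf_ae.measurable_mk.abs)
  refine ⟨_, hF_meas, Set.inter_subset_left, pos_iff_ne_zero.mpr hF, ?_⟩
  refine (hL (ε⁻¹ • f') _ (X.smul_mem _ (X.mem_congr hf_ae.ae_eq_mk hf))
    (measurable_const.indicator hF_meas).aemeasurable (.of_forall fun x => ?_)).1
  by_cases hx : x ∈ E ∩ {x | ε ≤ |f' x|}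
  · rw [Set.indicator_of_mem hx, Pi.smul_apply, smul_eq_mul, abs_mul, abs_of_pos (inv_pos.mpr hε),
      abs_one, ← div_eq_inv_mul, one_le_div hε]
    exact hx.2
  · simp only [Set.indicator_of_notMem hx, abs_zero]
    positivity

end BanachInL0

/-- **Characterizations of the saturation property.**
For a Banach space `X ⊆ L⁰(ℝⁿ)` with the lattice property, the following are
equivalent: (i) saturation; (ii) an increasing exhaustion of `ℝⁿ` by measurable
sets whose indicators lie in `X`; (iii) existence of an a.e. positive `u ∈ X`;
(iv) `X` separates `L⁰` via integration. -/
theorem propSa_tfae {n : ℕ} (X : BanachInL0 n) (hL : X.PropL) :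
    [X.PropSa,
     ∃ F : ℕ → Set (Rn n), (∀ k, MeasurableSet (F k)) ∧ Monotone F ∧
       (∀ k, (F k).indicator (fun _ => (1 : ℝ)) ∈ X.carrier) ∧
       (⋃ k, F k) = Set.univ,
     ∃ u ∈ X.carrier, ∀ᵐ x ∂volume, 0 < u x,
     ∀ g : Rn n → ℝ, AEMeasurable g volume →
       (∀ f ∈ X.carrier, ∫⁻ x, ENNReal.ofReal |f x * g x| = 0) →
       g =ᵐ[volume] (0 : Rn n → ℝ)].TFAE := by
  tfae_have 1 → 2 := X.exists_monotone_iUnion_eq_univ_of_propSa hL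
  tfae_have 2 → 3
  | ⟨_, _, _, hF, h_cover⟩ => X.exists_ae_pos_of_iUnion_eq_univ hL hF h_cover
  tfae_have 3 → 4
  | ⟨u, hu, hu_pos⟩, g, hg, h_zero =>
    ae_eq_zero_of_lintegral_abs_mul_eq_zero hu_pos ((X.aemeasurable hu).mul hg) (h_zero u hu)
  tfae_have 4 → 1 := X.propSa_of_forall_lintegral_eq_zero hL
  tfae_finish

end
end

section
/- Let X be a saturated Banach function space on ℝ^n and assume the Hardy–Littlewood maximal operator M is bounded on X, i.e. there is a constant C such that Mf ∈ X and ‖Mf‖_X ≤ C‖f‖_X for all f ∈ X. Then for every ball B ⊂ ℝ^n one has χ_B ∈ X and χ_B ∈ X'. -/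
open MeasureTheory Filter ENNReal

noncomputable section

lemma hlMaximal_ge {n : ℕ} (f : Rn n → ℝ) {x c : Rn n} {r : ℝ}
    (hx : x ∈ Metric.ball c r) :
    (volume (Metric.ball c r))⁻¹ * ∫⁻ y in Metric.ball c r, ENNReal.ofReal |f y|
      ≤ hlMaximal f x := by
  refine le_iSup_of_le c ?_
  refine le_iSup_of_le r ?_
  exact le_iSup_of_le hx le_rfl

lemma lintegral_ball_lt_top {n : ℕ} (f : Rn n → ℝ) (x₀ : Rn n)
    (hfin : hlMaximal f x₀ < ∞) (c : Rn n) (r : ℝ) (hr : 0 < r) :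
    ∫⁻ y in Metric.ball c r, ENNReal.ofReal |f y| < ∞ := by
  set R : ℝ := dist x₀ c + r with hR
  have hRpos : 0 < R := by positivity
  have hsub : Metric.ball c r ⊆ Metric.ball x₀ R := by
    intro y hy
    have : dist y x₀ ≤ dist y c + dist c x₀ := dist_triangle _ _ _
    rw [Metric.mem_ball] at hy ⊢
    rw [dist_comm c x₀] at this
    linarith
  have hx₀ : x₀ ∈ Metric.ball x₀ R := Metric.mem_ball_self hRpos
  have hv0 : volume (Metric.ball x₀ R) ≠ 0 := (Metric.measure_ball_pos volume x₀ hRpos).ne'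
  have hvt : volume (Metric.ball x₀ R) ≠ ∞ := measure_ball_lt_top.ne
  have hle := hlMaximal_ge f hx₀
  have hbig : ∫⁻ y in Metric.ball x₀ R, ENNReal.ofReal |f y| < ∞ := by
    have h1 : (volume (Metric.ball x₀ R))⁻¹ *
        ∫⁻ y in Metric.ball x₀ R, ENNReal.ofReal |f y| < ∞ := lt_of_le_of_lt hle hfin
    calc ∫⁻ y in Metric.ball x₀ R, ENNReal.ofReal |f y|
        = volume (Metric.ball x₀ R) * ((volume (Metric.ball x₀ R))⁻¹ *
          ∫⁻ y in Metric.ball x₀ R, ENNReal.ofReal |f y|) := by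
          rw [← mul_assoc, ENNReal.mul_inv_cancel hv0 hvt, one_mul]
      _ < ∞ := ENNReal.mul_lt_top hvt.lt_top h1
  exact lt_of_le_of_lt (lintegral_mono_set hsub) hbig

/-- If `X` is a saturated Banach function space on which the Hardy–Littlewood
maximal operator is bounded, then the indicator of every ball belongs to `X`
and to its Köthe dual `X'`. -/
theorem indicator_ball_mem_of_maximal_bounded {n : ℕ} (X : BanachInL0 n)
    (hX : X.IsSaturatedBFS)
    (hM : ∃ C : ℝ, ∀ f ∈ X.carrier, (∀ᵐ x ∂volume, hlMaximal f x < ∞) ∧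
      (fun x => (hlMaximal f x).toReal) ∈ X.carrier ∧
      X.norm (fun x => (hlMaximal f x).toReal) ≤ C * X.norm f) :
    ∀ (c : Rn n) (r : ℝ), 0 < r →
      (Metric.ball c r).indicator (fun _ => (1 : ℝ)) ∈ X.carrier ∧
      (Metric.ball c r).indicator (fun _ => (1 : ℝ)) ∈ kotheDual X.carrier := by
  intro c r hr
  obtain ⟨C, hMb⟩ := hM
  have hBmeas : MeasurableSet (Metric.ball c r : Set (Rn n)) := measurableSet_ball
  have hχmeas : AEMeasurable ((Metric.ball c r).indicator (fun _ => (1:ℝ))) volume :=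
    (measurable_const.indicator hBmeas).aemeasurable
  constructor
  · -- Part 1: the indicator of the ball belongs to X
    obtain ⟨F, hFmeas, hFsub, hFpos, hFmem⟩ :=
      hX.2.2 (Metric.ball c r) hBmeas (Metric.measure_ball_pos volume c hr)
    obtain ⟨hfin, hMmem, -⟩ := hMb _ hFmem
    set χF := F.indicator (fun _ => (1:ℝ)) with hχF
    have hI : ∫⁻ y in Metric.ball c r, ENNReal.ofReal |χF y| = volume F := by
      have hpt : ∀ y, ENNReal.ofReal |χF y| = F.indicator (fun _ => (1:ℝ≥0∞)) y := by
        intro y; by_cases hy : y ∈ F <;> simp [hχF, Set.indicator, hy]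
      rw [lintegral_congr hpt, lintegral_indicator hFmeas, setLIntegral_one,
        Measure.restrict_apply hFmeas, Set.inter_eq_left.mpr hFsub]
    set a := (volume (Metric.ball c r))⁻¹ * volume F with ha
    have ha0 : a ≠ 0 :=
      mul_ne_zero (ENNReal.inv_ne_zero.mpr measure_ball_lt_top.ne) hFpos.ne'
    have hat : a ≠ ∞ :=
      ENNReal.mul_ne_top (ENNReal.inv_ne_top.mpr (Metric.measure_ball_pos volume c hr).ne')
        (lt_of_le_of_lt (measure_mono hFsub) measure_ball_lt_top).ne
    have haR : 0 < a.toReal := ENNReal.toReal_pos ha0 hat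
    have hsmem : (a.toReal⁻¹ • fun x => (hlMaximal χF x).toReal) ∈ X.carrier :=
      X.smul_mem _ hMmem
    have hbound : ∀ᵐ x ∂volume,
        |(Metric.ball c r).indicator (fun _ => (1:ℝ)) x| ≤
          |(a.toReal⁻¹ • fun x => (hlMaximal χF x).toReal) x| := by
      filter_upwards [hfin] with x hx
      by_cases hxB : x ∈ Metric.ball c r
      · have h1 : a ≤ hlMaximal χF x := by
          rw [ha, ← hI]; exact hlMaximal_ge χF hxB
        have h2 : a.toReal ≤ (hlMaximal χF x).toReal := ENNReal.toReal_mono hx.ne h1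
        have h3 : (1:ℝ) ≤ a.toReal⁻¹ * (hlMaximal χF x).toReal := by
          rw [← inv_mul_cancel₀ haR.ne']
          exact mul_le_mul_of_nonneg_left h2 (inv_nonneg.mpr haR.le)
        have h4 : (0:ℝ) ≤ a.toReal⁻¹ * (hlMaximal χF x).toReal := le_trans zero_le_one h3
        simpa [Set.indicator_of_mem hxB, abs_of_nonneg h4] using h3
      · simp only [Set.indicator_of_notMem hxB, abs_zero]
        exact abs_nonneg _
    exact (hX.1 _ _ hsmem hχmeas hbound).1
  · -- Part 2: the indicator of the ball belongs to the Köthe dual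
    refine ⟨hχmeas, fun f hf => ?_⟩
    obtain ⟨hfin, -, -⟩ := hMb f hf
    have hne : (volume : Measure (Rn n)) ≠ 0 := by
      intro h
      have := Metric.measure_ball_pos volume (0 : Rn n) one_pos
      rw [h] at this
      simp at this
    haveI : (ae (volume : Measure (Rn n))).NeBot := ae_neBot.mpr hne
    obtain ⟨x₀, hx₀⟩ := hfin.exists
    have hIB := lintegral_ball_lt_top f x₀ hx₀ c r hr
    refine ⟨((X.aemeasurable hf).mul hχmeas).aestronglyMeasurable, ?_⟩
    rw [hasFiniteIntegral_iff_norm]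
    have hpt : ∀ x, ENNReal.ofReal ‖f x * (Metric.ball c r).indicator (fun _ => (1:ℝ)) x‖ =
        (Metric.ball c r).indicator (fun y => ENNReal.ofReal |f y|) x := by
      intro x
      by_cases hxB : x ∈ Metric.ball c r <;>
        simp [Set.indicator_of_mem, Set.indicator_of_notMem, hxB, Real.norm_eq_abs]
    rw [lintegral_congr hpt, lintegral_indicator hBmeas]
    exact hIB


end
end

section
/- Let X be a saturated Banach function space on ℝ^n and assume the Hardy–Littlewood maximal operator M is bounded on X, i.e. there is a constant C such that Mf ∈ X and ‖Mf‖_X ≤ C‖f‖_X for all f ∈ X. Then X is a ball Banach function space: in addition to (L) and (F), X satisfies (BSi) (χ_B ∈ X for every ball B) and (BLI) (for every ball B there is a constant C_B with ∫_B |f| ≤ C_B‖f‖_X for all f ∈ X). -/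
open MeasureTheory Filter ENNReal

noncomputable section

/-!
Saturation provides a bounded set `E` of positive measure with `χ_E ∈ X`. Given a ball `B`,
choose a ball `B' ⊇ B ∪ E`; on `B` the maximal function `M χ_E` is at least `|E| / |B'| > 0`,
so the lattice property gives `χ_B ∈ X`. Likewise `M f ≥ |B|⁻¹ ∫_B |f|` on `B`, so comparing the
norms of `χ_B` and `M f` yields `∫_B |f| ≤ |B| ‖M f‖_X / ‖χ_B‖_X ≤ C |B| ‖f‖_X / ‖χ_B‖_X`.
-/

open Metric

lemma Set.indicator_const_eq_smul_indicator_one {α : Type*} (E : Set α) (a : ℝ) :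
    (E.indicator fun _ => a) = a • E.indicator fun _ => (1 : ℝ) := by
  funext x
  by_cases hx : x ∈ E <;> simp [hx]

lemma setLIntegral_le_hlMaximal {n : ℕ} (f : Rn n → ℝ) {E : Set (Rn n)} {c x : Rn n} {r : ℝ}
    (hE : E ⊆ ball c r) (hx : x ∈ ball c r) :
    (volume (ball c r))⁻¹ * ∫⁻ y in E, ENNReal.ofReal |f y| ≤ hlMaximal f x :=
  le_iSup_of_le c <| le_iSup_of_le r <| le_iSup_of_le hx <|
    mul_le_mul_right (lintegral_mono_set hE) _

lemma measure_le_hlMaximal_indicator {n : ℕ} {E : Set (Rn n)} (hE : MeasurableSet E)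
    {c x : Rn n} {r : ℝ} (hEB : E ⊆ ball c r) (hx : x ∈ ball c r) :
    (volume (ball c r))⁻¹ * volume E ≤ hlMaximal (E.indicator fun _ => (1 : ℝ)) x := by
  have hint : ∫⁻ y in E, ENNReal.ofReal |E.indicator (fun _ => (1 : ℝ)) y| = volume E := by
    rw [← setLIntegral_one E]
    exact setLIntegral_congr_fun hE fun y hy => by simp [Set.indicator_of_mem hy]
  rw [← hint]
  exact setLIntegral_le_hlMaximal _ hEB hx

lemma setLIntegral_ball_ne_top_of_ae_hlMaximal_lt_top {n : ℕ} {f : Rn n → ℝ}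
    (hfin : ∀ᵐ x ∂volume, hlMaximal f x < ∞) {c : Rn n} {r : ℝ} (hr : 0 < r) :
    ∫⁻ y in ball c r, ENNReal.ofReal |f y| ≠ ∞ := by
  obtain ⟨x, hx, hxfin⟩ := Measure.exists_mem_of_measure_ne_zero_of_ae
    (measure_ball_pos volume c hr).ne' (ae_restrict_of_ae hfin)
  intro htop
  have := setLIntegral_le_hlMaximal f subset_rfl hx
  rw [htop, ENNReal.mul_top (ENNReal.inv_ne_zero.2 measure_ball_lt_top.ne)] at this
  exact (top_le_iff.1 this ▸ hxfin).false

namespace BanachInL0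

variable {n : ℕ} {X : BanachInL0 n}

lemma norm_pos_of_not_ae_eq_zero {f : Rn n → ℝ} (hf : f ∈ X.carrier)
    (h : ¬ f =ᵐ[volume] 0) : 0 < X.norm f :=
  (X.norm_nonneg f).lt_of_ne fun h0 => h (X.norm_eq_zero hf h0.symm)

lemma norm_indicator_ball_pos {c : Rn n} {r : ℝ} (hr : 0 < r)
    (hB : (ball c r).indicator (fun _ => (1 : ℝ)) ∈ X.carrier) :
    0 < X.norm ((ball c r).indicator fun _ => 1) := by
  refine X.norm_pos_of_not_ae_eq_zero hB fun h => (measure_ball_pos volume c hr).ne' ?_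
  rw [Filter.EventuallyEq, ae_iff] at h
  exact measure_mono_null (fun x hx => by simpa using hx) h

namespace PropL

lemma indicator_const_mem (hL : X.PropL) {g : Rn n → ℝ} (hg : g ∈ X.carrier)
    {E : Set (Rn n)} (hE : MeasurableSet E) {a : ℝ} (h : ∀ᵐ x ∂volume, x ∈ E → |a| ≤ |g x|) :
    E.indicator (fun _ => a) ∈ X.carrier ∧ X.norm (E.indicator fun _ => a) ≤ X.norm g := by
  refine hL g _ hg (aemeasurable_const.indicator hE) ?_
  filter_upwards [h] with x hx
  by_cases hxE : x ∈ E
  · simpa [Set.indicator_of_mem hxE] using hx hxE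
  · simp [Set.indicator_of_notMem hxE]

lemma indicator_const_mem_of_le_hlMaximal (hL : X.PropL) {f : Rn n → ℝ}
    (hfin : ∀ᵐ x ∂volume, hlMaximal f x < ∞)
    (hmem : (fun x => (hlMaximal f x).toReal) ∈ X.carrier)
    {E : Set (Rn n)} (hE : MeasurableSet E) {δ : ℝ≥0∞} (hδ : ∀ x ∈ E, δ ≤ hlMaximal f x) :
    E.indicator (fun _ => δ.toReal) ∈ X.carrier ∧
      X.norm (E.indicator fun _ => δ.toReal) ≤ X.norm fun x => (hlMaximal f x).toReal := by
  refine hL.indicator_const_mem hmem hE ?_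
  filter_upwards [hfin] with x hx hxE
  simpa using ENNReal.toReal_mono hx.ne (hδ x hxE)

lemma indicator_ball_mem (hL : X.PropL) {E : Set (Rn n)} (hEm : MeasurableSet E)
    (hEb : Bornology.IsBounded E) (hEpos : 0 < volume E)
    (hfin : ∀ᵐ x ∂volume, hlMaximal (E.indicator fun _ => 1) x < ∞)
    (hmem : (fun x => (hlMaximal (E.indicator fun _ => 1) x).toReal) ∈ X.carrier)
    (c : Rn n) (r : ℝ) : (ball c r).indicator (fun _ => (1 : ℝ)) ∈ X.carrier := by
  obtain ⟨R, hR⟩ := ((isBounded_ball (x := c) (r := r)).union hEb).subset_ball (0 : Rn n)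
  obtain ⟨y, hy⟩ := nonempty_of_measure_ne_zero hEpos.ne'
  set δ := (volume (ball (0 : Rn n) R))⁻¹ * volume E
  have hδ : δ.toReal ≠ 0 := ENNReal.toReal_ne_zero.2
    ⟨mul_ne_zero (ENNReal.inv_ne_zero.2 measure_ball_lt_top.ne) hEpos.ne',
      ENNReal.mul_ne_top (ENNReal.inv_ne_top.2 (measure_ball_pos volume _
        (pos_of_mem_ball (hR (Or.inr hy)))).ne') hEb.measure_lt_top.ne⟩
  have hle : ∀ x ∈ ball c r, δ ≤ hlMaximal (E.indicator fun _ => 1) x := fun x hx =>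
    measure_le_hlMaximal_indicator hEm (Set.subset_union_right.trans hR) (hR (Or.inl hx))
  have := X.smul_mem δ.toReal⁻¹ (hL.indicator_const_mem_of_le_hlMaximal hfin hmem
    measurableSet_ball hle).1
  rwa [Set.indicator_const_eq_smul_indicator_one, smul_smul, inv_mul_cancel₀ hδ, one_smul] at this

lemma setLIntegral_ball_le (hL : X.PropL) {c : Rn n} {r : ℝ} (hr : 0 < r)
    (hB : (ball c r).indicator (fun _ => (1 : ℝ)) ∈ X.carrier) {f : Rn n → ℝ} {C : ℝ}
    (hfin : ∀ᵐ x ∂volume, hlMaximal f x < ∞)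
    (hmem : (fun x => (hlMaximal f x).toReal) ∈ X.carrier)
    (hnorm : X.norm (fun x => (hlMaximal f x).toReal) ≤ C * X.norm f) :
    ∫⁻ y in ball c r, ENNReal.ofReal |f y| ≤ ENNReal.ofReal
      ((volume (ball c r)).toReal / X.norm ((ball c r).indicator fun _ => 1) * C * X.norm f) := by
  set A := ∫⁻ y in ball c r, ENNReal.ofReal |f y|
  set v := (volume (ball c r)).toReal
  set N := X.norm ((ball c r).indicator fun _ => (1 : ℝ))
  have hv : 0 < v := ENNReal.toReal_pos (measure_ball_pos volume c hr).ne' measure_ball_lt_top.ne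
  have hN : 0 < N := X.norm_indicator_ball_pos hr hB
  have hA : A ≠ ∞ := setLIntegral_ball_ne_top_of_ae_hlMaximal_lt_top hfin hr
  obtain ⟨-, hle⟩ := hL.indicator_const_mem_of_le_hlMaximal hfin hmem measurableSet_ball
    fun x hx => setLIntegral_le_hlMaximal f subset_rfl hx
  rw [Set.indicator_const_eq_smul_indicator_one, X.norm_smul, ENNReal.toReal_mul,
    ENNReal.toReal_inv, abs_of_nonneg (by positivity)] at hle
  rw [← ENNReal.ofReal_toReal hA]
  refine ENNReal.ofReal_le_ofReal ?_
  calc A.toReal = v / N * (v⁻¹ * A.toReal * N) := by field_simp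
    _ ≤ v / N * (C * X.norm f) := by gcongr ?_ * ?_; exact hle.trans hnorm
    _ = v / N * C * X.norm f := by ring

end PropL

end BanachInL0

/-- If `X` is a saturated Banach function space on which the Hardy–Littlewood
maximal operator is bounded, then `X` is a ball Banach function space. -/
theorem isBallBFS_of_maximal_bounded {n : ℕ} (X : BanachInL0 n)
    (hX : X.IsSaturatedBFS)
    (hM : ∃ C : ℝ, ∀ f ∈ X.carrier, (∀ᵐ x ∂volume, hlMaximal f x < ∞) ∧
      (fun x => (hlMaximal f x).toReal) ∈ X.carrier ∧
      X.norm (fun x => (hlMaximal f x).toReal) ≤ C * X.norm f) :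
    X.IsBallBFS := by
  obtain ⟨C, hM⟩ := hM
  obtain ⟨hL, hF, hSa⟩ := hX
  obtain ⟨E, hEm, hEB, hEpos, hE⟩ :=
    hSa (ball 0 1) measurableSet_ball (measure_ball_pos volume 0 one_pos)
  have hBSi : X.PropBSi := fun c r _ =>
    hL.indicator_ball_mem hEm (isBounded_ball.subset hEB) hEpos (hM _ hE).1 (hM _ hE).2.1 c r
  exact ⟨hL, hF, hBSi, fun c r hr => ⟨_, fun f hf =>
    hL.setLIntegral_ball_le hr (hBSi c r hr) (hM f hf).1 (hM f hf).2.1 (hM f hf).2.2⟩⟩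
end
end

section
/- Let a > 0 and t > 0. For every non-negative measurable function f on (0,∞), ∫_0^t a e^{−a(t−s)} f(s) ds ≤ (1 + e^{−1}) Mf(t), where M is the one-dimensional Hardy–Littlewood maximal operator on (0,∞). -/
/-!
The kernel `k s = a e^{-a(t-s)}` is nondecreasing and has total mass `1` on `(-∞, t]`. For any
nondecreasing kernel, the layer-cake formula writes `∫₀ᵗ k |f|` and `∫₀ᵗ k` as integrals over
`λ > 0` of the `|f|`-weighted and of the Lebesgue measure of `{k > λ}`; each such set is an
interval ending at `t`, on which the first measure is at most `M f(t)` times the second. Hence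
the convolution is bounded by `M f(t)` itself, with room to spare against `1 + e⁻¹`.
-/

open MeasureTheory Filter ENNReal

noncomputable section

/-- The one-dimensional Hardy–Littlewood maximal operator on `(0,∞)`:
`M f t = sup_{0 < a < t < b < ∞} (1/(b-a)) ∫_a^b |f(s)| ds`. -/
def hlMax1 (f : ℝ → ℝ) (t : ℝ) : ℝ≥0∞ :=
  ⨆ (a : ℝ) (b : ℝ) (_ : 0 < a ∧ a < t ∧ t < b),
    (ENNReal.ofReal (b - a))⁻¹ * ∫⁻ s in Set.Ioo a b, ENNReal.ofReal |f s|

open Set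

section MaximalBounds

variable {f : ℝ → ℝ} {t : ℝ}

theorem setLIntegral_Ioo_le_hlMax1_of_lt_of_lt {α b : ℝ} (hα : 0 < α) (hαt : α < t)
    (htb : t < b) :
    ∫⁻ s in Ioo α b, ENNReal.ofReal |f s| ≤ ENNReal.ofReal (b - α) * hlMax1 f t := by
  have hle : (ENNReal.ofReal (b - α))⁻¹ * ∫⁻ s in Ioo α b, ENNReal.ofReal |f s| ≤ hlMax1 f t :=
    le_iSup_of_le α (le_iSup_of_le b (le_iSup_of_le ⟨hα, hαt, htb⟩ le_rfl))
  have hpos : ENNReal.ofReal (b - α) ≠ 0 := by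
    rw [ne_eq, ENNReal.ofReal_eq_zero, not_le]
    linarith
  exact (ENNReal.inv_mul_le_iff hpos ENNReal.ofReal_ne_top).mp hle

/-- Each `(α, t)` with `α > c` sits inside `(α, t + (α - c))`, of length exactly `t - c`, so
exhausting `(c, t)` by such intervals needs no limit in the right endpoint. -/
theorem setLIntegral_Ioo_le_hlMax1 {c : ℝ} (hc : 0 ≤ c) :
    ∫⁻ s in Ioo c t, ENNReal.ofReal |f s| ≤ ENNReal.ofReal (t - c) * hlMax1 f t := by
  rcases le_or_gt t c with htc | hct
  · simp [Ioo_eq_empty_of_le htc]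
  obtain ⟨u, hu_anti, hu_mem, hu_lim⟩ := exists_seq_strictAnti_tendsto' hct
  have hunion : ⋃ n, Ioo (u n) t = Ioo c t := by
    ext s
    simp only [mem_iUnion, mem_Ioo]
    constructor
    · rintro ⟨n, hns, hst⟩
      exact ⟨(hu_mem n).1.trans hns, hst⟩
    · rintro ⟨hcs, hst⟩
      obtain ⟨n, hn⟩ := (hu_lim.eventually (gt_mem_nhds hcs)).exists
      exact ⟨n, hn, hst⟩
  have hmono : Monotone fun n => Ioo (u n) t := fun m n hmn =>
    Ioo_subset_Ioo_left (hu_anti.antitone hmn)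
  rw [← hunion, setLIntegral_iUnion_of_directed _ hmono.directed_le]
  refine iSup_le fun n => ?_
  obtain ⟨hcu, hut⟩ := hu_mem n
  calc ∫⁻ s in Ioo (u n) t, ENNReal.ofReal |f s|
      ≤ ∫⁻ s in Ioo (u n) (t + (u n - c)), ENNReal.ofReal |f s| :=
        lintegral_mono_set (Ioo_subset_Ioo_right (by linarith))
    _ ≤ ENNReal.ofReal (t + (u n - c) - u n) * hlMax1 f t :=
        setLIntegral_Ioo_le_hlMax1_of_lt_of_lt (by linarith) hut (by linarith)
    _ = ENNReal.ofReal (t - c) * hlMax1 f t := by ring_nf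

theorem setLIntegral_le_volume_mul_hlMax1 {S : Set ℝ} (hS : S ⊆ Ioo 0 t)
    (hup : ∀ s ∈ S, ∀ s' ∈ Ioo s t, s' ∈ S) :
    ∫⁻ s in S, ENNReal.ofReal |f s| ≤ volume S * hlMax1 f t := by
  rcases S.eq_empty_or_nonempty with rfl | hne
  · simp
  have hbdd : BddBelow S := ⟨0, fun s hs => (hS hs).1.le⟩
  set c := sInf S
  have hc : 0 ≤ c := le_csInf hne fun s hs => (hS hs).1.le
  have hS_sub : S ⊆ Ico c t := fun s hs => ⟨csInf_le hbdd hs, (hS hs).2⟩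
  have hS_sup : Ioo c t ⊆ S := by
    rintro s ⟨hcs, hst⟩
    obtain ⟨s₀, hs₀, hs₀s⟩ := exists_lt_of_csInf_lt hne hcs
    exact hup s₀ hs₀ s ⟨hs₀s, hst⟩
  calc ∫⁻ s in S, ENNReal.ofReal |f s|
      ≤ ∫⁻ s in Ico c t, ENNReal.ofReal |f s| := lintegral_mono_set hS_sub
    _ = ∫⁻ s in Ioo c t, ENNReal.ofReal |f s| := setLIntegral_congr Ioo_ae_eq_Ico.symm
    _ ≤ ENNReal.ofReal (t - c) * hlMax1 f t := setLIntegral_Ioo_le_hlMax1 hc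
    _ = volume (Ioo c t) * hlMax1 f t := by rw [Real.volume_Ioo]
    _ ≤ volume S * hlMax1 f t := by gcongr

theorem setLIntegral_mul_le_hlMax1_of_monotoneOn (hf : Measurable f) {k : ℝ → ℝ}
    (hk : MonotoneOn k (Ioo 0 t)) (hk0 : ∀ s ∈ Ioo 0 t, 0 ≤ k s) :
    ∫⁻ s in Ioo 0 t, ENNReal.ofReal (k s) * ENNReal.ofReal |f s|
      ≤ (∫⁻ s in Ioo 0 t, ENNReal.ofReal (k s)) * hlMax1 f t := by
  set μ := volume.restrict (Ioo 0 t)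
  set g : ℝ → ℝ≥0∞ := fun s => ENNReal.ofReal |f s|
  set ν := μ.withDensity g
  have hg : Measurable g := ENNReal.measurable_ofReal.comp hf.abs
  have hk_meas : AEMeasurable k μ := aemeasurable_restrict_of_monotoneOn measurableSet_Ioo hk
  have hk_nonneg : 0 ≤ᵐ[μ] k := (ae_restrict_iff' measurableSet_Ioo).2 (ae_of_all _ hk0)
  have hνμ : ν ≪ μ := withDensity_absolutelyContinuous μ g
  have hlevel : ∀ r, ν {s | r < k s} ≤ μ {s | r < k s} * hlMax1 f t := by
    intro r
    rw [withDensity_apply', Measure.restrict_restrict' measurableSet_Ioo,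
      Measure.restrict_apply' measurableSet_Ioo]
    refine setLIntegral_le_volume_mul_hlMax1 inter_subset_right ?_
    rintro s ⟨hrs, hs0, hst⟩ s' ⟨hss', hs't⟩
    have hs' : s' ∈ Ioo 0 t := ⟨hs0.trans hss', hs't⟩
    exact ⟨hrs.trans_le (hk ⟨hs0, hst⟩ hs' hss'.le), hs'⟩
  have hanti : Antitone fun r => μ {s | r < k s} := fun r r' hrr' =>
    measure_mono fun s (hs : r' < k s) => hrr'.trans_lt hs
  calc ∫⁻ s in Ioo 0 t, ENNReal.ofReal (k s) * g s
      = ∫⁻ s, ENNReal.ofReal (k s) ∂ν := by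
        rw [lintegral_withDensity_eq_lintegral_mul_non_measurable μ hg
          (ae_of_all _ fun _ => ENNReal.ofReal_lt_top)]
        exact lintegral_congr fun s => mul_comm _ _
    _ = ∫⁻ r in Ioi 0, ν {s | r < k s} :=
        lintegral_eq_lintegral_meas_lt ν (hνμ.ae_le hk_nonneg) (hk_meas.mono_ac hνμ)
    _ ≤ ∫⁻ r in Ioi 0, μ {s | r < k s} * hlMax1 f t := lintegral_mono hlevel
    _ = (∫⁻ r in Ioi 0, μ {s | r < k s}) * hlMax1 f t := lintegral_mul_const _ hanti.measurable
    _ = (∫⁻ s in Ioo 0 t, ENNReal.ofReal (k s)) * hlMax1 f t := by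
        rw [lintegral_eq_lintegral_meas_lt μ hk_nonneg hk_meas]

end MaximalBounds

theorem lintegral_Iic_exp_kernel {a : ℝ} (ha : 0 < a) (t : ℝ) :
    ∫⁻ s in Iic t, ENNReal.ofReal (a * Real.exp (-a * (t - s))) = 1 := by
  have hkernel : (fun s => a * Real.exp (-a * (t - s)))
      = fun s => a * Real.exp (-a * t) * Real.exp (a * s) := by
    ext s
    rw [mul_assoc, ← Real.exp_add]
    ring_nf
  have hint : IntegrableOn (fun s => a * Real.exp (-a * (t - s))) (Iic t) := by
    rw [hkernel]
    exact (integrableOn_exp_mul_Iic ha t).const_mul _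
  rw [← ofReal_integral_eq_lintegral_ofReal hint
    (ae_of_all _ fun s => by positivity), hkernel, integral_const_mul, integral_exp_mul_Iic ha,
    mul_assoc, mul_div_assoc', ← Real.exp_add]
  simp [ha.ne']

theorem convolution_exp_le_maximal_general (a t : ℝ) (ha : 0 < a)
    (f : ℝ → ℝ) (hf : Measurable f) (hf0 : ∀ s ∈ Set.Ioi (0 : ℝ), 0 ≤ f s) :
    ∫⁻ s in Set.Ioo 0 t, ENNReal.ofReal (a * Real.exp (-a * (t - s)) * f s)
      ≤ ENNReal.ofReal (1 + Real.exp (-1)) * hlMax1 f t := by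
  set k : ℝ → ℝ := fun s => a * Real.exp (-a * (t - s))
  have hk_mono : Monotone k := fun x y hxy =>
    mul_le_mul_of_nonneg_left (Real.exp_le_exp.2 (by nlinarith)) ha.le
  have hk_mass : ∫⁻ s in Ioo 0 t, ENNReal.ofReal (k s) ≤ 1 :=
    (lintegral_mono_set (Ioo_subset_Iio_self.trans Iio_subset_Iic_self)).trans (lintegral_Iic_exp_kernel ha t).le
  calc ∫⁻ s in Ioo 0 t, ENNReal.ofReal (k s * f s)
      = ∫⁻ s in Ioo 0 t, ENNReal.ofReal (k s) * ENNReal.ofReal |f s| := by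
        refine setLIntegral_congr_fun measurableSet_Ioo fun s hs => ?_
        rw [abs_of_nonneg (hf0 s hs.1), ENNReal.ofReal_mul (by positivity)]
    _ ≤ (∫⁻ s in Ioo 0 t, ENNReal.ofReal (k s)) * hlMax1 f t :=
        setLIntegral_mul_le_hlMax1_of_monotoneOn hf (hk_mono.monotoneOn _) fun s _ => by positivity
    _ ≤ 1 * hlMax1 f t := by gcongr
    _ ≤ ENNReal.ofReal (1 + Real.exp (-1)) * hlMax1 f t := by
        gcongr
        rw [← ENNReal.ofReal_one]
        exact ENNReal.ofReal_le_ofReal (by linarith [Real.exp_pos (-1)])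

/-- For `a, t > 0` and a non-negative measurable function `f` on `(0,∞)`,
`∫_0^t a e^{-a(t-s)} f(s) ds ≤ (1 + e⁻¹) M f(t)`. -/
theorem convolution_exp_le_maximal (a t : ℝ) (ha : 0 < a) (ht : 0 < t)
    (f : ℝ → ℝ) (hf : Measurable f) (hf0 : ∀ s ∈ Set.Ioi (0 : ℝ), 0 ≤ f s) :
    ∫⁻ s in Set.Ioo 0 t, ENNReal.ofReal (a * Real.exp (-a * (t - s)) * f s)
      ≤ ENNReal.ofReal (1 + Real.exp (-1)) * hlMax1 f t :=
  convolution_exp_le_maximal_general a t ha f hf hf0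

end
end

section
/- Let 1 < q < ∞. There is a constant C such that for every family (g_j)_{j∈ℤ} of non-negative measurable functions on (0,∞), ‖ sup_{j∈ℤ} ∫_s^∞ 4^j e^{−4^j(t−s)} g_j(t) dt ‖_{L^q_s(0,∞)} ≤ C ‖ sup_{j∈ℤ} g_j ‖_{L^q(0,∞)}, where the L^q norms are taken with respect to the variable s ∈ (0,∞). -/
/-!
For `l > 0` the kernel `l e^{-l (t - s)}` on `t > s` is at most `∑ₙ l e^{-n} 1_{t < s + (n+1)/l}`,
so its integral against `G = sup_j g_j` (extended by `0` off `(0,∞)`) is at most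
`∑ₙ (n + 2) e^{-n} M G(s) ≤ 6 M G(s)`, uniformly in the scale `l = 4^j`, where `M` is the
uncentred Hardy–Littlewood maximal function. It remains to bound `M` on `L^q`: the Vitali covering
lemma gives the weak type `(1, 1)` bound, and splitting `f` at half the level, the layer cake
formula turns it into the strong type `(q, q)` bound (Marcinkiewicz interpolation).
-/

open MeasureTheory Filter ENNReal

noncomputable section

open Set Metric

def maximalFunction (f : ℝ → ℝ≥0∞) (x : ℝ) : ℝ≥0∞ :=
  ⨆ (a : ℝ) (b : ℝ) (_ : x ∈ Ioo a b), ⨍⁻ t in Ioo a b, f t ∂volume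

section MaximalFunction

variable {f g : ℝ → ℝ≥0∞} {a b x : ℝ}

lemma setLAverage_Ioo_le_maximalFunction (hx : x ∈ Ioo a b) :
    ⨍⁻ t in Ioo a b, f t ∂volume ≤ maximalFunction f x :=
  le_iSup₂_of_le a b <| le_iSup_of_le hx le_rfl

lemma setLIntegral_Ioo_le_mul_maximalFunction (hx : x ∈ Ioo a b) :
    ∫⁻ t in Ioo a b, f t ≤ ENNReal.ofReal (b - a) * maximalFunction f x := by
  rw [← Real.volume_Ioo, ← measure_mul_setLAverage _ measure_Ioo_lt_top.ne]
  gcongr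
  exact setLAverage_Ioo_le_maximalFunction hx

lemma lowerSemicontinuous_maximalFunction (f : ℝ → ℝ≥0∞) :
    LowerSemicontinuous (maximalFunction f) := by
  have : maximalFunction f = fun x ↦ ⨆ (a : ℝ) (b : ℝ),
      (Ioo a b).indicator (fun _ ↦ ⨍⁻ t in Ioo a b, f t ∂volume) x := by
    ext x
    simp only [maximalFunction, indicator, iSup_eq_if, bot_eq_zero]
  rw [this]
  exact lowerSemicontinuous_iSup fun a ↦ lowerSemicontinuous_iSup fun b ↦
    isOpen_Ioo.lowerSemicontinuous_indicator bot_le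

lemma measurable_maximalFunction (f : ℝ → ℝ≥0∞) : Measurable (maximalFunction f) :=
  (lowerSemicontinuous_maximalFunction f).measurable

lemma setLAverage_Ioo_add_const (g : ℝ → ℝ≥0∞) (κ : ℝ≥0∞) (hab : a < b) :
    ⨍⁻ t in Ioo a b, (g t + κ) ∂volume = (⨍⁻ t in Ioo a b, g t ∂volume) + κ := by
  have h0 : volume (Ioo a b) ≠ 0 := by simp [hab]
  rw [setLAverage_eq', setLAverage_eq', lintegral_add_right _ measurable_const, lintegral_const,
    Measure.smul_apply, Measure.restrict_apply_univ, smul_eq_mul,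
    ENNReal.inv_mul_cancel h0 measure_Ioo_lt_top.ne, mul_one]

lemma maximalFunction_le_add_const {κ : ℝ≥0∞} (h : ∀ y, f y ≤ g y + κ) (x : ℝ) :
    maximalFunction f x ≤ maximalFunction g x + κ := by
  refine iSup₂_le fun a b ↦ iSup_le fun hx ↦ ?_
  calc ⨍⁻ t in Ioo a b, f t ∂volume ≤ ⨍⁻ t in Ioo a b, (g t + κ) ∂volume :=
        setLAverage_mono_ae _ (.of_forall h)
    _ = (⨍⁻ t in Ioo a b, g t ∂volume) + κ := setLAverage_Ioo_add_const g κ (hx.1.trans hx.2)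
    _ ≤ maximalFunction g x + κ := by gcongr; exact setLAverage_Ioo_le_maximalFunction hx

end MaximalFunction

section WeakType

variable {f : ℝ → ℝ≥0∞} {x : ℝ} {ε : ℝ≥0∞}

lemma exists_mul_le_setLIntegral_closedBall (h : ε < maximalFunction f x) :
    ∃ r > 0, ε * ENNReal.ofReal r ≤ ∫⁻ t in closedBall x r, f t := by
  simp only [maximalFunction, lt_iSup_iff] at h
  obtain ⟨a, b, hx, hε⟩ := h
  refine ⟨b - a, sub_pos.2 (hx.1.trans hx.2), ?_⟩
  calc ε * ENNReal.ofReal (b - a) ≤ ENNReal.ofReal (b - a) * ⨍⁻ t in Ioo a b, f t ∂volume := by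
        rw [mul_comm]; gcongr
    _ = ∫⁻ t in Ioo a b, f t := by
        rw [← Real.volume_Ioo, measure_mul_setLAverage _ measure_Ioo_lt_top.ne]
    _ ≤ ∫⁻ t in closedBall x (b - a), f t := by
        refine lintegral_mono_set fun t ht ↦ ?_
        rw [mem_closedBall, Real.dist_eq, abs_le]
        constructor <;> linarith [ht.1, ht.2, hx.1, hx.2]

theorem volume_lt_maximalFunction_le (f : ℝ → ℝ≥0∞) (hε : ε ≠ 0) (hε' : ε ≠ ∞) :
    volume {x | ε < maximalFunction f x} ≤ 8 * ε⁻¹ * ∫⁻ y, f y := by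
  by_cases hI : ∫⁻ y, f y = ∞
  · simp [hI, ENNReal.mul_top, hε']
  set E := {x | ε < maximalFunction f x}
  choose! r hr0 hr using fun x (hx : x ∈ E) ↦ exists_mul_le_setLIntegral_closedBall hx
  have hr_le : ∀ x ∈ E, ENNReal.ofReal (r x) ≤ ε⁻¹ * ∫⁻ t in closedBall x (r x), f t :=
    fun x hx ↦ (ENNReal.mul_le_iff_le_inv hε hε').1 (hr x hx)
  have hR : ∀ x ∈ E, r x ≤ (ε⁻¹ * ∫⁻ y, f y).toReal := fun x hx ↦
    (ENNReal.ofReal_le_iff_le_toReal (ENNReal.mul_ne_top (ENNReal.inv_ne_top.2 hε) hI)).1 <|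
      (hr_le x hx).trans (by gcongr; exact Measure.restrict_le_self)
  obtain ⟨u, huE, hu_disj, hu_cover⟩ :=
    Vitali.exists_disjoint_subfamily_covering_enlargement_closedBall E id r _ hR 4 (by norm_num)
  simp only [id] at hu_disj hu_cover
  have hu : u.Countable := hu_disj.countable_of_nonempty_interior fun x hx ↦
    ⟨x, ball_subset_interior_closedBall (mem_ball_self (hr0 x (huE hx)))⟩
  have hE : E ⊆ ⋃ x ∈ u, closedBall x (4 * r x) := fun x hx ↦ by
    obtain ⟨y, hy, hsub⟩ := hu_cover x hx
    exact mem_biUnion hy (hsub (mem_closedBall_self (hr0 x hx).le))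
  calc volume E ≤ ∑' x : u, volume (closedBall (x : ℝ) (4 * r x)) :=
        (measure_mono hE).trans (measure_biUnion_le _ hu _)
    _ = ∑' x : u, 8 * ENNReal.ofReal (r x) := by
        congr! 2 with x
        rw [Real.volume_closedBall, ← mul_assoc, ENNReal.ofReal_mul (by norm_num)]
        norm_num
    _ ≤ ∑' x : u, 8 * (ε⁻¹ * ∫⁻ t in closedBall (x : ℝ) (r x), f t) :=
        ENNReal.tsum_le_tsum fun x ↦ by gcongr; exact hr_le x (huE x.2)
    _ = 8 * ε⁻¹ * ∫⁻ t in ⋃ x ∈ u, closedBall x (r x), f t := by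
        rw [lintegral_biUnion hu (fun _ _ ↦ measurableSet_closedBall) hu_disj,
          ENNReal.tsum_mul_left, ENNReal.tsum_mul_left, mul_assoc]
    _ ≤ 8 * ε⁻¹ * ∫⁻ y, f y := by gcongr; exact Measure.restrict_le_self

end WeakType

section LayerCake

variable {p : ℝ}

lemma lintegral_Ioo_rpow_sub_one (hp : 0 < p) {b : ℝ} (hb : 0 ≤ b) :
    ∫⁻ t in Ioo 0 b, ENNReal.ofReal (t ^ (p - 1)) = ENNReal.ofReal (b ^ p / p) := by
  have hint : IntegrableOn (fun t : ℝ ↦ t ^ (p - 1)) (Ioc 0 b) :=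
    (intervalIntegral.intervalIntegrable_rpow' (by linarith)).1
  have hnn : 0 ≤ᵐ[volume.restrict (Ioc 0 b)] fun t : ℝ ↦ t ^ (p - 1) := by
    filter_upwards [ae_restrict_mem measurableSet_Ioc] with t ht using Real.rpow_nonneg ht.1.le _
  rw [Measure.restrict_congr_set Ioo_ae_eq_Ioc, ← ofReal_integral_eq_lintegral_ofReal hint hnn,
    ← intervalIntegral.integral_of_le hb, integral_rpow (Or.inl (by linarith)), sub_add_cancel,
    Real.zero_rpow hp.ne', sub_zero]

lemma lintegral_Ioi_rpow_sub_one (hp : 0 < p) :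
    ∫⁻ t in Ioi 0, ENNReal.ofReal (t ^ (p - 1)) = ∞ := by
  refine ENNReal.eq_top_of_forall_nnreal_le fun r ↦ ?_
  have hb : 0 ≤ (p * r) ^ p⁻¹ := by positivity
  calc (r : ℝ≥0∞) = ENNReal.ofReal (((p * r) ^ p⁻¹) ^ p / p) := by
        rw [← Real.rpow_mul (by positivity), inv_mul_cancel₀ hp.ne', Real.rpow_one,
          mul_div_cancel_left₀ _ hp.ne', ofReal_coe_nnreal]
    _ = ∫⁻ t in Ioo 0 ((p * r) ^ p⁻¹), ENNReal.ofReal (t ^ (p - 1)) :=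
        (lintegral_Ioo_rpow_sub_one hp hb).symm
    _ ≤ ∫⁻ t in Ioi 0, ENNReal.ofReal (t ^ (p - 1)) := lintegral_mono_set Ioo_subset_Ioi_self

lemma setLIntegral_Ioi_indicator_rpow_sub_one (hp : 0 < p) (T : ℝ≥0∞) :
    ∫⁻ t in Ioi 0, {t : ℝ | ENNReal.ofReal t < T}.indicator (fun t ↦ ENNReal.ofReal (t ^ (p - 1))) t
      = ENNReal.ofReal p⁻¹ * T ^ p := by
  have hT : MeasurableSet {t : ℝ | ENNReal.ofReal t < T} :=
    measurableSet_lt ENNReal.measurable_ofReal measurable_const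
  rw [lintegral_indicator hT, Measure.restrict_restrict hT]
  rcases eq_or_ne T ∞ with rfl | hT
  · simp [lintegral_Ioi_rpow_sub_one hp, top_rpow_of_pos hp, hp]
  have hset : {t : ℝ | ENNReal.ofReal t < T} ∩ Ioi 0 = Ioo 0 T.toReal := by
    ext t
    rw [mem_inter_iff, and_comm]
    exact and_congr_right fun ht ↦ ENNReal.ofReal_lt_iff_lt_toReal (le_of_lt ht) hT
  rw [hset, lintegral_Ioo_rpow_sub_one hp toReal_nonneg, ← ofReal_toReal hT,
    ofReal_rpow_of_nonneg toReal_nonneg hp.le, ← ofReal_mul (by positivity), toReal_ofReal',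
    max_eq_left toReal_nonneg, div_eq_inv_mul]

theorem lintegral_rpow_eq_lintegral_meas_ofReal_lt_mul {α : Type*} [MeasurableSpace α]
    (μ : Measure α) [SFinite μ] {F : α → ℝ≥0∞} (hF : Measurable F) (hp : 0 < p) :
    ∫⁻ x, F x ^ p ∂μ = ENNReal.ofReal p *
      ∫⁻ t in Ioi 0, μ {x | ENNReal.ofReal t < F x} * ENNReal.ofReal (t ^ (p - 1)) := by
  have hS : MeasurableSet {z : α × ℝ | ENNReal.ofReal z.2 < F z.1} :=
    measurableSet_lt (by fun_prop) (hF.comp measurable_fst)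
  have hmeas : AEMeasurable (Function.uncurry fun x t ↦
      {t : ℝ | ENNReal.ofReal t < F x}.indicator (fun t ↦ ENNReal.ofReal (t ^ (p - 1))) t)
      (μ.prod (volume.restrict (Ioi 0))) :=
    ((ENNReal.measurable_ofReal.comp (measurable_snd.pow_const _)).indicator hS).aemeasurable
  calc ∫⁻ x, F x ^ p ∂μ
      = ∫⁻ x, ENNReal.ofReal p * (∫⁻ t in Ioi 0, {t : ℝ | ENNReal.ofReal t < F x}.indicator
          (fun t ↦ ENNReal.ofReal (t ^ (p - 1))) t) ∂μ := by
        refine lintegral_congr fun x ↦ ?_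
        rw [setLIntegral_Ioi_indicator_rpow_sub_one hp, ← mul_assoc, ← ofReal_mul hp.le,
          mul_inv_cancel₀ hp.ne', ofReal_one, one_mul]
    _ = ENNReal.ofReal p * ∫⁻ t in Ioi 0, ∫⁻ x,
          {x | ENNReal.ofReal t < F x}.indicator (fun _ ↦ ENNReal.ofReal (t ^ (p - 1))) x ∂μ := by
        rw [lintegral_const_mul' _ _ ofReal_ne_top, lintegral_lintegral_swap hmeas]
        rfl
    _ = _ := by
        congr 1
        refine lintegral_congr fun t ↦ ?_
        rw [lintegral_indicator_const (measurableSet_lt measurable_const hF), mul_comm]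

end LayerCake

lemma ofReal_rpow_sub_one_eq_inv_mul {t : ℝ} (ht : 0 < t) (p : ℝ) :
    ENNReal.ofReal (t ^ (p - 1)) = (ENNReal.ofReal t)⁻¹ * ENNReal.ofReal (t ^ p) := by
  rw [← ofReal_inv_of_pos ht, ← ofReal_mul (by positivity), Real.rpow_sub_one ht.ne',
    div_eq_inv_mul]

lemma lintegral_setLIntegral_lt_two_mul_mul_rpow {β : Type*} [MeasurableSpace β] {ν : Measure β}
    [SFinite ν] {f : β → ℝ≥0∞} (hf : Measurable f) {q : ℝ} (hq : 1 < q) :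
    ∫⁻ t in Ioi 0, (∫⁻ y in {y | ENNReal.ofReal t < 2 * f y}, f y ∂ν) *
        ENNReal.ofReal (t ^ (q - 1 - 1)) =
      2 ^ (q - 1) / ENNReal.ofReal (q - 1) * ∫⁻ y, f y ^ q ∂ν := by
  have hq0 : 0 < q - 1 := by linarith
  have h2f : Measurable fun y ↦ 2 * f y := hf.const_mul 2
  have hpow : ∀ y, (f * fun y ↦ (2 * f y) ^ (q - 1)) y = 2 ^ (q - 1) * f y ^ q := fun y ↦ by
    rw [Pi.mul_apply, mul_rpow_of_nonneg _ _ hq0.le, mul_left_comm]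
    nth_rw 1 [← rpow_one (f y)]
    rw [← rpow_add_of_nonneg _ _ zero_le_one hq0.le, add_sub_cancel]
  -- the left side is the layer cake integral of `2 f` against the measure `f dν`
  have hcake := lintegral_rpow_eq_lintegral_meas_ofReal_lt_mul (ν.withDensity f) h2f hq0
  simp_rw [withDensity_apply _ (measurableSet_lt measurable_const h2f)] at hcake
  have h0 : ENNReal.ofReal (q - 1) ≠ 0 := by simpa using hq0
  rw [← ENNReal.mul_right_inj h0 ofReal_ne_top, ← hcake,
    lintegral_withDensity_eq_lintegral_mul _ hf (h2f.pow_const _), lintegral_congr hpow,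
    lintegral_const_mul' _ _ (rpow_ne_top_of_nonneg hq0.le ofNat_ne_top), ← mul_assoc,
    ENNReal.mul_div_cancel h0 ofReal_ne_top]

theorem lintegral_rpow_le_of_meas_lt_le {α β : Type*} [MeasurableSpace α] [MeasurableSpace β]
    {μ : Measure α} {ν : Measure β} [SFinite μ] [SFinite ν] {F : α → ℝ≥0∞} {f : β → ℝ≥0∞}
    (hF : Measurable F) (hf : Measurable f) {C : ℝ≥0∞} {q : ℝ} (hq : 1 < q)
    (h : ∀ t > 0, μ {x | ENNReal.ofReal t < F x} ≤
      C * (ENNReal.ofReal t)⁻¹ * ∫⁻ y in {y | ENNReal.ofReal t < 2 * f y}, f y ∂ν) :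
    ∫⁻ x, F x ^ q ∂μ ≤
      C * (ENNReal.ofReal q * 2 ^ (q - 1) / ENNReal.ofReal (q - 1)) * ∫⁻ y, f y ^ q ∂ν := by
  set I : ℝ → ℝ≥0∞ := fun t ↦ ∫⁻ y in {y | ENNReal.ofReal t < 2 * f y}, f y ∂ν
  have hI : Antitone I := fun s t hst ↦
    lintegral_mono_set fun y hy ↦ (ofReal_le_ofReal hst).trans_lt hy
  calc ∫⁻ x, F x ^ q ∂μ
      = ENNReal.ofReal q *
          ∫⁻ t in Ioi 0, μ {x | ENNReal.ofReal t < F x} * ENNReal.ofReal (t ^ (q - 1)) :=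
        lintegral_rpow_eq_lintegral_meas_ofReal_lt_mul μ hF (by linarith)
    _ ≤ ENNReal.ofReal q * ∫⁻ t in Ioi 0, C * (I t * ENNReal.ofReal (t ^ (q - 1 - 1))) := by
        gcongr ENNReal.ofReal q * ?_
        refine setLIntegral_mono' measurableSet_Ioi fun t (ht : 0 < t) ↦ ?_
        rw [ofReal_rpow_sub_one_eq_inv_mul ht (q - 1)]
        calc μ {x | ENNReal.ofReal t < F x} * ENNReal.ofReal (t ^ (q - 1))
            ≤ C * (ENNReal.ofReal t)⁻¹ * I t * ENNReal.ofReal (t ^ (q - 1)) := by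
              gcongr; exact h t ht
          _ = C * (I t * ((ENNReal.ofReal t)⁻¹ * ENNReal.ofReal (t ^ (q - 1)))) := by ring
    _ = C * (ENNReal.ofReal q * 2 ^ (q - 1) / ENNReal.ofReal (q - 1)) * ∫⁻ y, f y ^ q ∂ν := by
        have hmeas : Measurable fun t : ℝ ↦ I t * ENNReal.ofReal (t ^ (q - 1 - 1)) :=
          hI.measurable.mul (by fun_prop)
        rw [lintegral_const_mul _ hmeas,
          lintegral_setLIntegral_lt_two_mul_mul_rpow hf hq, mul_div_assoc]
        ring

section StrongType

variable {f : ℝ → ℝ≥0∞}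

lemma volume_lt_maximalFunction_le_setLIntegral (hf : Measurable f) {t : ℝ} (ht : 0 < t) :
    volume {x | ENNReal.ofReal t < maximalFunction f x} ≤
      16 * (ENNReal.ofReal t)⁻¹ * ∫⁻ y in {y | ENNReal.ofReal t < 2 * f y}, f y := by
  set S := {y | ENNReal.ofReal t < 2 * f y}
  have hS : MeasurableSet S := measurableSet_lt measurable_const (hf.const_mul 2)
  have hsplit : ∀ y, f y ≤ S.indicator f y + ENNReal.ofReal t / 2 := fun y ↦ by
    by_cases hy : y ∈ S
    · simp only [indicator_of_mem hy, le_self_add]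
    · refine le_add_left ((ENNReal.le_div_iff_mul_le (.inl two_ne_zero) (.inl ofNat_ne_top)).2 ?_)
      rw [mul_comm]
      exact not_lt.1 hy
  have hsub : {x | ENNReal.ofReal t < maximalFunction f x} ⊆
      {x | ENNReal.ofReal t / 2 < maximalFunction (S.indicator f) x} :=
    ofPred_subset_ofPred.2 fun x hx ↦ by
    refine lt_of_not_ge fun hle ↦ not_lt.2 ?_ hx
    calc maximalFunction f x ≤ maximalFunction (S.indicator f) x + ENNReal.ofReal t / 2 :=
          maximalFunction_le_add_const hsplit x
      _ ≤ ENNReal.ofReal t / 2 + ENNReal.ofReal t / 2 := by gcongr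
      _ = ENNReal.ofReal t := ENNReal.add_halves _
  calc volume {x | ENNReal.ofReal t < maximalFunction f x}
      ≤ 8 * (ENNReal.ofReal t / 2)⁻¹ * ∫⁻ y, S.indicator f y :=
        (measure_mono hsub).trans <| volume_lt_maximalFunction_le _
          (by simpa using ht) (div_ne_top ofReal_ne_top two_ne_zero)
    _ = 16 * (ENNReal.ofReal t)⁻¹ * ∫⁻ y in S, f y := by
        rw [lintegral_indicator hS, ENNReal.inv_div (.inl ofNat_ne_top) (.inl two_ne_zero),
          div_eq_mul_inv, ← mul_assoc]
        norm_num

theorem lintegral_maximalFunction_rpow_le (hf : Measurable f) {q : ℝ} (hq : 1 < q) :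
    ∫⁻ x, maximalFunction f x ^ q ≤
      16 * (ENNReal.ofReal q * 2 ^ (q - 1) / ENNReal.ofReal (q - 1)) * ∫⁻ y, f y ^ q :=
  lintegral_rpow_le_of_meas_lt_le (measurable_maximalFunction f) hf hq fun _ ht ↦
    volume_lt_maximalFunction_le_setLIntegral hf ht

theorem eLpNorm'_maximalFunction_le (hf : Measurable f) {q : ℝ} (hq : 1 < q) :
    eLpNorm' (maximalFunction f) q volume ≤
      (16 * (ENNReal.ofReal q * 2 ^ (q - 1) / ENNReal.ofReal (q - 1))) ^ (1 / q) *
        eLpNorm' f q volume := by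
  simp only [eLpNorm'_eq_lintegral_enorm, enorm_eq_self]
  rw [← mul_rpow_of_nonneg _ _ (by positivity)]
  exact rpow_le_rpow (lintegral_maximalFunction_rpow_le hf hq) (by positivity)

end StrongType

lemma eLpNorm'_indicator_eq_eLpNorm'_restrict {α ε : Type*} [MeasurableSpace α]
    [TopologicalSpace ε] [ESeminormedAddMonoid ε] {μ : Measure α} {f : α → ε} {s : Set α}
    {q : ℝ} (hq : 0 < q) (hs : MeasurableSet s) :
    eLpNorm' (s.indicator f) q μ = eLpNorm' f q (μ.restrict s) := by
  have := eLpNorm_indicator_eq_eLpNorm_restrict (p := ENNReal.ofReal q) (μ := μ) (f := f) hs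
  rwa [eLpNorm_eq_eLpNorm' (by simpa using hq) ofReal_ne_top,
    eLpNorm_eq_eLpNorm' (by simpa using hq) ofReal_ne_top, toReal_ofReal hq.le] at this

section ExponentialKernel

lemma tsum_ofReal_add_two_mul_exp_neg_le :
    ∑' n : ℕ, ENNReal.ofReal ((n + 2) * Real.exp (-n)) ≤ 6 := by
  have hr : Real.exp (-(1 / 2)) ≤ 2 / 3 := by
    rw [Real.exp_neg, inv_le_comm₀ (Real.exp_pos _) (by norm_num)]
    linarith [Real.add_one_le_exp (1 / 2)]
  set r := Real.exp (-(1 / 2))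
  have hterm : ∀ n : ℕ, ((n : ℝ) + 2) * Real.exp (-n) ≤ 2 * r ^ n := fun n ↦ by
    have h := Real.add_one_le_exp (n / 2)
    rw [← Real.exp_nat_mul, mul_neg, mul_one_div]
    calc ((n : ℝ) + 2) * Real.exp (-n) ≤ 2 * Real.exp (n / 2) * Real.exp (-n) := by gcongr; linarith
      _ = 2 * Real.exp (-(n / 2)) := by rw [mul_assoc, ← Real.exp_add]; ring_nf
  calc ∑' n : ℕ, ENNReal.ofReal ((n + 2) * Real.exp (-n))
      ≤ ∑' n : ℕ, ENNReal.ofReal (2 * r ^ n) :=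
        ENNReal.tsum_le_tsum fun n ↦ ENNReal.ofReal_le_ofReal (hterm n)
    _ = ENNReal.ofReal (2 * (1 - r)⁻¹) := by
        rw [← ENNReal.ofReal_tsum_of_nonneg (fun n ↦ by positivity)
          ((summable_geometric_of_lt_one (by positivity) (by linarith)).mul_left 2),
          tsum_mul_left, tsum_geometric_of_lt_one (by positivity) (by linarith)]
    _ ≤ 6 := by
        rw [show (6 : ℝ≥0∞) = ENNReal.ofReal 6 by norm_num]
        refine ENNReal.ofReal_le_ofReal ?_
        rw [← div_eq_mul_inv, div_le_iff₀ (by linarith)]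
        linarith

variable {l s t : ℝ}

lemma ofReal_exp_kernel_le_tsum (hl : 0 < l) (hst : s < t) :
    ENNReal.ofReal (l * Real.exp (-l * (t - s))) ≤
      ∑' n : ℕ,
        (Iio (s + (n + 1) / l)).indicator (fun _ ↦ ENNReal.ofReal (l * Real.exp (-n))) t := by
  set n := ⌊l * (t - s)⌋₊
  have hn : (n : ℝ) ≤ l * (t - s) := Nat.floor_le (by nlinarith)
  have ht : t < s + (n + 1) / l := by
    rw [← sub_lt_iff_lt_add', lt_div_iff₀ hl, mul_comm]
    exact Nat.lt_floor_add_one _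
  refine le_trans ?_ (ENNReal.le_tsum n)
  rw [indicator_of_mem (show t ∈ Iio _ from ht)]
  gcongr
  linarith

lemma setLIntegral_Ioi_indicator_Iio_le (hl : 0 < l) (G : ℝ → ℝ≥0∞) {c : ℝ} (hc : s < c) :
    ∫⁻ t in Ioi s, (Iio c).indicator G t ≤
      ENNReal.ofReal (c - s + 1 / l) * maximalFunction G s := by
  rw [lintegral_indicator measurableSet_Iio, Measure.restrict_restrict measurableSet_Iio]
  calc ∫⁻ t in Iio c ∩ Ioi s, G t ≤ ∫⁻ t in Ioo (s - 1 / l) c, G t :=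
        lintegral_mono_set fun t ht ↦ ⟨by linarith [ht.2.out, one_div_pos.2 hl], ht.1⟩
    _ ≤ ENNReal.ofReal (c - (s - 1 / l)) * maximalFunction G s :=
        setLIntegral_Ioo_le_mul_maximalFunction ⟨by linarith [one_div_pos.2 hl], hc⟩
    _ = _ := by ring_nf

theorem setLIntegral_exp_kernel_le_maximalFunction (hl : 0 < l) {G : ℝ → ℝ≥0∞}
    (hG : Measurable G) (s : ℝ) :
    ∫⁻ t in Ioi s, ENNReal.ofReal (l * Real.exp (-l * (t - s))) * G t ≤
      6 * maximalFunction G s := by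
  calc ∫⁻ t in Ioi s, ENNReal.ofReal (l * Real.exp (-l * (t - s))) * G t
      ≤ ∫⁻ t in Ioi s, ∑' n : ℕ,
          ENNReal.ofReal (l * Real.exp (-n)) * (Iio (s + (n + 1) / l)).indicator G t := by
        refine setLIntegral_mono' measurableSet_Ioi fun t (ht : s < t) ↦ ?_
        calc _ ≤ (∑' n : ℕ, (Iio (s + (n + 1) / l)).indicator
                (fun _ ↦ ENNReal.ofReal (l * Real.exp (-n))) t) * G t := by
              gcongr; exact ofReal_exp_kernel_le_tsum hl ht
          _ = _ := by
              rw [← ENNReal.tsum_mul_right]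
              refine tsum_congr fun n ↦ ?_
              by_cases h : t ∈ Iio (s + (n + 1) / l) <;> simp [h]
    _ = ∑' n : ℕ, ENNReal.ofReal (l * Real.exp (-n)) *
          ∫⁻ t in Ioi s, (Iio (s + (n + 1) / l)).indicator G t := by
        rw [lintegral_tsum fun n ↦ ((hG.indicator measurableSet_Iio).const_mul _).aemeasurable]
        exact tsum_congr fun n ↦ lintegral_const_mul' _ _ ofReal_ne_top
    _ ≤ ∑' n : ℕ, ENNReal.ofReal ((n + 2) * Real.exp (-n)) * maximalFunction G s := by
        refine ENNReal.tsum_le_tsum fun n ↦ ?_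
        have hc : s < s + (n + 1) / l := lt_add_of_pos_right _ (by positivity)
        have hlen : l * Real.exp (-n) * (s + (n + 1) / l - s + 1 / l) =
            (n + 2) * Real.exp (-n) := by
          field_simp
          ring
        grw [setLIntegral_Ioi_indicator_Iio_le hl G hc]
        rw [← mul_assoc, ← ENNReal.ofReal_mul (by positivity), hlen]
    _ ≤ 6 * maximalFunction G s := by
        rw [ENNReal.tsum_mul_right]
        gcongr
        exact tsum_ofReal_add_two_mul_exp_neg_le

lemma setLIntegral_exp_kernel_mul_le (hl : 0 < l) {G : ℝ → ℝ≥0∞} (hG : Measurable G)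
    {h : ℝ → ℝ} (hh : ∀ t > s, ENNReal.ofReal (h t) ≤ G t) :
    ∫⁻ t in Ioi s, ENNReal.ofReal (l * Real.exp (-l * (t - s)) * h t) ≤
      6 * maximalFunction G s := by
  refine le_trans (setLIntegral_mono' measurableSet_Ioi fun t (ht : s < t) ↦ ?_)
    (setLIntegral_exp_kernel_le_maximalFunction hl hG s)
  rw [ENNReal.ofReal_mul (by positivity)]
  gcongr
  exact hh t ht

end ExponentialKernel

/-- For `1 < q < ∞` and non-negative measurable `g_j` on `(0,∞)`,
`‖sup_j ∫_s^∞ 4^j e^{-4^j (t-s)} g_j(t) dt‖_{L^q_s(0,∞)} ≤ C ‖sup_j g_j‖_{L^q(0,∞)}`. -/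
theorem sup_exp_tail_Lq_bound (q : ℝ) (hq : 1 < q) :
    ∃ C : ℝ, 0 < C ∧ ∀ g : ℤ → ℝ → ℝ, (∀ j, Measurable (g j)) →
      (∀ j, ∀ t ∈ Set.Ioi (0 : ℝ), 0 ≤ g j t) →
      (∫⁻ s in Set.Ioi (0 : ℝ),
          (⨆ j : ℤ, ∫⁻ t in Set.Ioi s,
            ENNReal.ofReal ((4 : ℝ) ^ j * Real.exp (-(4 : ℝ) ^ j * (t - s)) * g j t)) ^ q) ^ (1 / q)
        ≤ ENNReal.ofReal C *
          (∫⁻ s in Set.Ioi (0 : ℝ), (⨆ j : ℤ, ENNReal.ofReal (g j s)) ^ q) ^ (1 / q) := by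
  have hq0 : 0 < q := by linarith
  set K : ℝ≥0∞ := 6 * (16 * (ENNReal.ofReal q * 2 ^ (q - 1) / ENNReal.ofReal (q - 1))) ^ (1 / q)
  have hK : K ≠ ∞ := by simp [K, ENNReal.div_eq_top, ENNReal.mul_eq_top, hq, hq0.le]
  have hK0 : K ≠ 0 := by simp [K, ENNReal.div_eq_top, ENNReal.mul_eq_top, hq, hq0]
  refine ⟨K.toReal, toReal_pos hK0 hK, fun g hg _ ↦ ?_⟩
  set G : ℝ → ℝ≥0∞ := (Ioi 0).indicator fun t ↦ ⨆ j : ℤ, ENNReal.ofReal (g j t)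
  have hG : Measurable G :=
    (Measurable.iSup fun j ↦ (hg j).ennreal_ofReal).indicator measurableSet_Ioi
  rw [ofReal_toReal hK]
  change eLpNorm' (fun s ↦ ⨆ j : ℤ, ∫⁻ t in Ioi s,
      ENNReal.ofReal ((4 : ℝ) ^ j * Real.exp (-(4 : ℝ) ^ j * (t - s)) * g j t)) q
        (volume.restrict (Ioi 0)) ≤
    K * eLpNorm' (fun s ↦ ⨆ j : ℤ, ENNReal.ofReal (g j s)) q (volume.restrict (Ioi 0))
  calc _ ≤ 6 * eLpNorm' (maximalFunction G) q (volume.restrict (Ioi 0)) := by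
        refine eLpNorm'_le_mul_eLpNorm'_of_ae_le_mul
          (measurable_maximalFunction G).aestronglyMeasurable ?_ hq0
        filter_upwards [ae_restrict_mem measurableSet_Ioi] with s (hs : 0 < s)
        exact iSup_le fun j ↦ setLIntegral_exp_kernel_mul_le (by positivity) hG fun t ht ↦
          (le_iSup (fun j ↦ ENNReal.ofReal (g j t)) j).trans_eq
            (indicator_of_mem (hs.trans ht) fun t ↦ ⨆ j : ℤ, ENNReal.ofReal (g j t)).symm
    _ ≤ 6 * eLpNorm' (maximalFunction G) q volume := by
        gcongr; exact Measure.restrict_le_self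
    _ ≤ 6 * ((16 * (ENNReal.ofReal q * 2 ^ (q - 1) / ENNReal.ofReal (q - 1))) ^ (1 / q) *
          eLpNorm' G q volume) := by
        gcongr; exact eLpNorm'_maximalFunction_le hG hq
    _ = _ := by rw [eLpNorm'_indicator_eq_eLpNorm'_restrict hq0 measurableSet_Ioi, ← mul_assoc]

end
end

section
/- Let 1 < τ < ∞ and let α, β > 0 with α + β = 1. There is a constant C such that for every t > 0 and every sequence (a_j)_{j∈ℤ} of non-negative reals, ∑_{j∈ℤ} 4^j e^{−4^j t} a_j ≤ C t^{−β} ( ∑_{j∈ℤ} (4^{jα} e^{−4^{j−1} t} a_j)^τ )^{1/τ}. -/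
/-!
Write `4^j e^{-4^j t} = (4^{jα} e^{-4^{j-1} t}) · (4^{jβ} e^{-(3/4) 4^j t})` and apply Hölder's
inequality over `ℤ` with exponents `τ` and `τ' = τ/(τ-1)`. The `ℓ^{τ'}` norm of the second factor
is a dyadic sum `∑_j 4^{jγ} e^{-4^j u}` with `γ = βτ'` and `u = (3/4)τ' t`, which is `O(u^{-γ})`:
after scaling `u` into a dyadic shell `[4^n, 4^{n+1})`, the bound
`x^γ e^{-x} ≤ C min(x^γ, x^{-γ})` makes the terms decay geometrically in `|j + n|`.
-/

open MeasureTheory Filter ENNReal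

noncomputable section

theorem ENNReal.tsum_mul_le_Lp_mul_Lq {ι : Type*} (f g : ι → ℝ≥0∞) {p q : ℝ}
    (hpq : p.HolderConjugate q) :
    ∑' i, f i * g i ≤ (∑' i, f i ^ p) ^ (1 / p) * (∑' i, g i ^ q) ^ (1 / q) := by
  let _ : MeasurableSpace ι := ⊤
  simpa only [lintegral_count, Pi.mul_apply] using
    lintegral_mul_le_Lp_mul_Lq Measure.count hpq
      (Measurable.of_discrete (f := f)).aemeasurable (Measurable.of_discrete (f := g)).aemeasurable

theorem ENNReal.tsum_int_pow_natAbs_le {r : ℝ≥0∞} (hr : r < 1) :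
    ∑' k : ℤ, r ^ k.natAbs ≤ 2 * (1 - r)⁻¹ := by
  rw [tsum_of_nat_of_neg_add_one ENNReal.summable ENNReal.summable, two_mul]
  gcongr
  · simp [ENNReal.tsum_geometric]
  · calc ∑' n : ℕ, r ^ (-((n : ℤ) + 1)).natAbs = ∑' n : ℕ, r ^ (n + 1) := rfl
      _ ≤ ∑' n : ℕ, r ^ n :=
        ENNReal.tsum_le_tsum fun n => pow_le_pow_of_le_one zero_le hr.le n.le_succ
      _ = (1 - r)⁻¹ := ENNReal.tsum_geometric r

namespace Real

theorem rpow_mul_exp_neg_le {γ x : ℝ} (hγ : 0 < γ) (hx : 0 ≤ x) :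
    x ^ γ * exp (-x) ≤ (γ / exp 1) ^ γ := by
  have key : (x / γ) ^ γ ≤ exp (x / γ - 1) ^ γ :=
    rpow_le_rpow (by positivity) (by linarith [add_one_le_exp (x / γ - 1)]) hγ.le
  rw [← exp_mul, div_rpow hx hγ.le, div_le_iff₀ (by positivity)] at key
  rw [div_rpow hγ.le (exp_pos 1).le, exp_one_rpow, le_div_iff₀ (exp_pos γ), mul_assoc,
    ← exp_add]
  calc x ^ γ * exp (-x + γ) ≤ exp ((x / γ - 1) * γ) * γ ^ γ * exp (-x + γ) := by gcongr
    _ = γ ^ γ := by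
      rw [mul_right_comm, ← exp_add]
      field_simp
      simp

theorem rpow_mul_exp_neg_le_mul_min {γ x : ℝ} (hγ : 0 < γ) (hx : 0 < x) :
    x ^ γ * exp (-x) ≤ max 1 ((2 * γ / exp 1) ^ (2 * γ)) * min (x ^ γ) (x ^ (-γ)) := by
  rw [mul_min_of_nonneg _ _ (by positivity)]
  apply le_min
  · calc x ^ γ * exp (-x) ≤ 1 * x ^ γ := by
          rw [mul_comm]; gcongr; exact exp_le_one_iff.2 (by linarith)
      _ ≤ _ := by gcongr; exact le_max_left _ _
  · calc x ^ γ * exp (-x) = x ^ (2 * γ) * exp (-x) * x ^ (-γ) := by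
          rw [mul_right_comm, ← rpow_add hx]; ring_nf
      _ ≤ (2 * γ / exp 1) ^ (2 * γ) * x ^ (-γ) := by
          gcongr; exact rpow_mul_exp_neg_le (by linarith) hx.le
      _ ≤ _ := by gcongr; exact le_max_right _ _

theorem min_rpow_rpow_neg_le_of_mem_Ico {b x γ : ℝ} {k : ℤ} (hb : 1 < b) (hγ : 0 ≤ γ)
    (hx : x ∈ Set.Ico (b ^ k) (b ^ (k + 1))) :
    min (x ^ γ) (x ^ (-γ)) ≤ b ^ γ * (b ^ (-γ)) ^ k.natAbs := by
  have hb0 : 0 < b := by linarith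
  have hbk : 0 < b ^ k := zpow_pos hb0 k
  rw [← rpow_mul_natCast hb0.le, ← rpow_add hb0, Nat.cast_natAbs, Int.cast_abs]
  rcases le_or_gt 0 k with hk | hk
  · calc min (x ^ γ) (x ^ (-γ)) ≤ x ^ (-γ) := min_le_right _ _
      _ ≤ (b ^ k) ^ (-γ) := rpow_le_rpow_of_nonpos hbk hx.1 (by linarith)
      _ = b ^ (k * -γ) := (rpow_intCast_mul hb0.le k _).symm
      _ ≤ b ^ (γ + -γ * |(k : ℝ)|) := by
        gcongr
        · exact hb.le
        · rw [abs_of_nonneg (by exact_mod_cast hk)]; nlinarith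
  · calc min (x ^ γ) (x ^ (-γ)) ≤ x ^ γ := min_le_left _ _
      _ ≤ (b ^ (k + 1)) ^ γ := rpow_le_rpow (hbk.le.trans hx.1) hx.2.le hγ
      _ = b ^ (γ + -γ * |(k : ℝ)|) := by
        rw [← rpow_intCast_mul hb0.le, abs_of_neg (by exact_mod_cast hk)]
        push_cast
        ring_nf

theorem tsum_zpow_rpow_mul_exp_neg_le {b γ : ℝ} (hb : 1 < b) (hγ : 0 < γ) :
    ∃ K : ℝ, 0 < K ∧ ∀ u : ℝ, 0 < u →
      ∑' j : ℤ, ENNReal.ofReal ((b ^ j) ^ γ * exp (-(b ^ j * u)))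
        ≤ ENNReal.ofReal (K * u ^ (-γ)) := by
  have hb0 : 0 < b := by linarith
  set M := max 1 ((2 * γ / exp 1) ^ (2 * γ))
  set r := b ^ (-γ)
  have hr0 : 0 < r := rpow_pos_of_pos hb0 _
  have hr1 : r < 1 := rpow_lt_one_of_one_lt_of_neg hb (by linarith)
  refine ⟨b ^ γ * M * (2 * (1 - r)⁻¹), by
    have := sub_pos.2 hr1; positivity, fun u hu => ?_⟩
  obtain ⟨n, hn⟩ := exists_mem_Ico_zpow hu hb
  have hterm (j : ℤ) :
      (b ^ j) ^ γ * exp (-(b ^ j * u)) ≤ u ^ (-γ) * (b ^ γ * M) * r ^ (j + n).natAbs := by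
    have hbj : 0 < b ^ j := zpow_pos hb0 j
    have hx : b ^ j * u ∈ Set.Ico (b ^ (j + n)) (b ^ (j + n + 1)) := by
      rw [add_assoc, zpow_add₀ hb0.ne', zpow_add₀ hb0.ne']
      exact ⟨mul_le_mul_of_nonneg_left hn.1 hbj.le, mul_lt_mul_of_pos_left hn.2 hbj⟩
    calc (b ^ j) ^ γ * exp (-(b ^ j * u))
        = u ^ (-γ) * ((b ^ j * u) ^ γ * exp (-(b ^ j * u))) := by
          rw [mul_rpow hbj.le hu.le, rpow_neg hu.le]
          field_simp
      _ ≤ u ^ (-γ) * (M * min ((b ^ j * u) ^ γ) ((b ^ j * u) ^ (-γ))) :=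
          mul_le_mul_of_nonneg_left
            (rpow_mul_exp_neg_le_mul_min hγ (mul_pos hbj hu)) (by positivity)
      _ ≤ u ^ (-γ) * (M * (b ^ γ * r ^ (j + n).natAbs)) := by
          gcongr; exact min_rpow_rpow_neg_le_of_mem_Ico hb hγ.le hx
      _ = u ^ (-γ) * (b ^ γ * M) * r ^ (j + n).natAbs := by ring
  calc ∑' j : ℤ, ENNReal.ofReal ((b ^ j) ^ γ * exp (-(b ^ j * u)))
      ≤ ∑' j : ℤ,
          ENNReal.ofReal (u ^ (-γ) * (b ^ γ * M)) * ENNReal.ofReal r ^ (j + n).natAbs :=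
        ENNReal.tsum_le_tsum fun j => by
          rw [← ofReal_pow hr0.le, ← ofReal_mul (by positivity)]
          exact ofReal_le_ofReal (hterm j)
    _ = ENNReal.ofReal (u ^ (-γ) * (b ^ γ * M)) * ∑' k : ℤ, ENNReal.ofReal r ^ k.natAbs := by
        rw [ENNReal.tsum_mul_left]
        congr 1
        exact (Equiv.addRight n).tsum_eq fun k : ℤ => ENNReal.ofReal r ^ k.natAbs
    _ ≤ ENNReal.ofReal (u ^ (-γ) * (b ^ γ * M)) * (2 * (1 - ENNReal.ofReal r)⁻¹) := by
        gcongr; exact ENNReal.tsum_int_pow_natAbs_le (ofReal_lt_one.2 hr1)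
    _ = ENNReal.ofReal (b ^ γ * M * (2 * (1 - r)⁻¹) * u ^ (-γ)) := by
        rw [← ofReal_one, ← ofReal_sub _ hr0.le, ← ofReal_inv_of_pos (sub_pos.2 hr1),
          ← ofReal_ofNat 2, ← ofReal_mul (by norm_num), ← ofReal_mul (by positivity)]
        ring_nf

theorem tsum_zpow_rpow_mul_exp_neg_mul_rpow_le {b γ c p : ℝ} (hb : 1 < b) (hγ : 0 < γ)
    (hc : 0 < c) (hp : 0 < p) :
    ∃ C : ℝ, 0 < C ∧ ∀ t : ℝ, 0 < t →
      (∑' j : ℤ, ENNReal.ofReal ((b ^ j) ^ γ * exp (-(c * b ^ j * t))) ^ p) ^ (1 / p)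
        ≤ ENNReal.ofReal C * ENNReal.ofReal (t ^ (-γ)) := by
  obtain ⟨K, hK, hsum⟩ := tsum_zpow_rpow_mul_exp_neg_le hb (mul_pos hγ hp)
  refine ⟨K ^ (1 / p) * (c * p) ^ (-γ), by positivity, fun t ht => ?_⟩
  have hbj (j : ℤ) : 0 < b ^ j := zpow_pos (by linarith) j
  have hterm (j : ℤ) : ENNReal.ofReal ((b ^ j) ^ γ * exp (-(c * b ^ j * t))) ^ p
      = ENNReal.ofReal ((b ^ j) ^ (γ * p) * exp (-(b ^ j * (c * p * t)))) := by
    rw [ofReal_rpow_of_nonneg (by positivity) hp.le, mul_rpow (by positivity) (exp_pos _).le,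
      ← rpow_mul (hbj j).le, ← exp_mul]
    ring_nf
  calc (∑' j : ℤ, ENNReal.ofReal ((b ^ j) ^ γ * exp (-(c * b ^ j * t))) ^ p) ^ (1 / p)
      ≤ ENNReal.ofReal (K * (c * p * t) ^ (-(γ * p))) ^ (1 / p) := by
        rw [tsum_congr hterm]
        gcongr
        exact hsum _ (by positivity)
    _ = ENNReal.ofReal (K ^ (1 / p) * (c * p) ^ (-γ)) * ENNReal.ofReal (t ^ (-γ)) := by
        rw [ofReal_rpow_of_nonneg (by positivity) (by positivity), ← ofReal_mul (by positivity),
          mul_rpow hK.le (by positivity), ← rpow_mul (by positivity),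
          mul_rpow (by positivity) ht.le, show -(γ * p) * (1 / p) = -γ by field_simp, mul_assoc]

end Real

theorem four_zpow_mul_exp_neg_eq {α β : ℝ} (hαβ : α + β = 1) (j : ℤ) (t : ℝ) :
    (4 : ℝ) ^ j * Real.exp (-(4 : ℝ) ^ j * t)
      = (4 : ℝ) ^ ((j : ℝ) * α) * Real.exp (-(4 : ℝ) ^ (j - 1) * t)
        * (((4 : ℝ) ^ j) ^ β * Real.exp (-(3 / 4 * (4 : ℝ) ^ j * t))) := by
  rw [Real.rpow_intCast_mul (by norm_num), mul_mul_mul_comm, ← Real.rpow_add (by positivity),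
    hαβ, Real.rpow_one, ← Real.exp_add, zpow_sub_one₀ (by norm_num)]
  ring_nf

theorem holder_dyadic_exp_sum_general (τ α β : ℝ) (hτ : 1 < τ)
    (hβ : 0 < β) (hαβ : α + β = 1) :
    ∃ C : ℝ, 0 < C ∧ ∀ t : ℝ, 0 < t → ∀ a : ℤ → ℝ, (∀ j, 0 ≤ a j) →
      ∑' j : ℤ, ENNReal.ofReal ((4 : ℝ) ^ j * Real.exp (-(4 : ℝ) ^ j * t) * a j)
        ≤ ENNReal.ofReal C * ENNReal.ofReal (t ^ (-β)) *
          (∑' j : ℤ,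
            ENNReal.ofReal ((4 : ℝ) ^ ((j : ℝ) * α) *
              Real.exp (-(4 : ℝ) ^ (j - 1) * t) * a j) ^ τ) ^ (1 / τ) := by
  have hpq : τ.HolderConjugate τ.conjExponent := .conjExponent hτ
  obtain ⟨C, hC, hg⟩ := Real.tsum_zpow_rpow_mul_exp_neg_mul_rpow_le (b := 4) (c := 3 / 4)
    (by norm_num) hβ (by norm_num) hpq.symm.pos
  refine ⟨C, hC, fun t ht a ha => ?_⟩
  calc ∑' j : ℤ, ENNReal.ofReal ((4 : ℝ) ^ j * Real.exp (-(4 : ℝ) ^ j * t) * a j)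
      = ∑' j : ℤ,
          ENNReal.ofReal ((4 : ℝ) ^ ((j : ℝ) * α) * Real.exp (-(4 : ℝ) ^ (j - 1) * t) * a j)
            * ENNReal.ofReal (((4 : ℝ) ^ j) ^ β * Real.exp (-(3 / 4 * (4 : ℝ) ^ j * t))) := by
        refine tsum_congr fun j => ?_
        rw [← ENNReal.ofReal_mul (mul_nonneg (by positivity) (ha j)),
          four_zpow_mul_exp_neg_eq hαβ]
        ring_nf
    _ ≤ _ := ENNReal.tsum_mul_le_Lp_mul_Lq _ _ hpq
    _ ≤ _ := mul_le_mul_right (hg t ht) _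
    _ = _ := mul_comm _ _

/-- For `1 < τ < ∞` and `α, β > 0` with `α + β = 1`, there is `C` such that for
all `t > 0` and non-negative reals `(a_j)_{j ∈ ℤ}`,
`∑_j 4^j e^{-4^j t} a_j ≤ C t^{-β} (∑_j (4^{jα} e^{-4^{j-1} t} a_j)^τ)^{1/τ}`. -/
theorem holder_dyadic_exp_sum (τ α β : ℝ) (hτ : 1 < τ)
    (hα : 0 < α) (hβ : 0 < β) (hαβ : α + β = 1) :
    ∃ C : ℝ, 0 < C ∧ ∀ t : ℝ, 0 < t → ∀ a : ℤ → ℝ, (∀ j, 0 ≤ a j) →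
      ∑' j : ℤ, ENNReal.ofReal ((4 : ℝ) ^ j * Real.exp (-(4 : ℝ) ^ j * t) * a j)
        ≤ ENNReal.ofReal C * ENNReal.ofReal (t ^ (-β)) *
          (∑' j : ℤ,
            ENNReal.ofReal ((4 : ℝ) ^ ((j : ℝ) * α) *
              Real.exp (-(4 : ℝ) ^ (j - 1) * t) * a j) ^ τ) ^ (1 / τ) :=
  holder_dyadic_exp_sum_general τ α β hτ hβ hαβ

end
end
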